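/- arXiv:2111.06709 — 13 statements merged into one kernel-verified Lean document; each statement's English description precedes it below -/
import Mathlib

section
/- Let X and Y be nonempty compact metric spaces and let λ, μ > 0 be real numbers. Then d_GH(λ·X, μ·Y) ≤ (1/2)·|λ − μ|·diam X + μ·d_GH(X, Y). -/
open Metric

/-- Type synonym for a metric space with distances scaled by `lam`. -/
def Scaled (lam : ℝ) (X : Type*) : Type _ := X

/-- The canonical map from `Scaled lam X` back to `X`. -/
def Scaled.unscale {lam : ℝ} {X : Type*} (x : Scaled lam X) : X := x

/-- The canonical map from `X` to `Scaled lam X`. -/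
def Scaled.mk (lam : ℝ) {X : Type*} (x : X) : Scaled lam X := x

/-- The metric on `Scaled lam X`: the metric of `X` multiplied by `lam`. -/
noncomputable instance Scaled.metricSpace (lam : ℝ) (X : Type*) [MetricSpace X]
    [hl : Fact (0 < lam)] : MetricSpace (Scaled lam X) where
  dist x y := lam * dist x.unscale y.unscale
  dist_self x := by simp
  dist_comm x y := by simp [dist_comm]
  dist_triangle x y z := by
    show lam * dist x.unscale z.unscale ≤
      lam * dist x.unscale y.unscale + lam * dist y.unscale z.unscale
    rw [← mul_add]
    exact mul_le_mul_of_nonneg_left (dist_triangle _ _ _) hl.out.le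
  eq_of_dist_eq_zero {x y} h := by
    have h' : lam * dist x.unscale y.unscale = 0 := h
    have : dist x.unscale y.unscale = 0 := by
      rcases mul_eq_zero.mp h' with h'' | h''
      · exact absurd h'' hl.out.ne'
      · exact h''
    exact (eq_of_dist_eq_zero this : x.unscale = y.unscale)

theorem Scaled.dist_eq {lam : ℝ} {X : Type*} [MetricSpace X] [Fact (0 < lam)]
    (x y : Scaled lam X) : dist x y = lam * dist x.unscale y.unscale := rfl

theorem Scaled.continuous_unscale {lam : ℝ} {X : Type*} [MetricSpace X] [hl : Fact (0 < lam)] :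
    Continuous (Scaled.unscale : Scaled lam X → X) := by
  have hl0 := hl.out
  rw [Metric.continuous_iff]
  intro b ε hε
  refine ⟨lam * ε, by positivity, fun a ha => ?_⟩
  rw [Scaled.dist_eq] at ha
  exact lt_of_mul_lt_mul_left (by simpa using ha) hl0.le

theorem Scaled.continuous_mk {lam : ℝ} {X : Type*} [MetricSpace X] [hl : Fact (0 < lam)] :
    Continuous (Scaled.mk lam : X → Scaled lam X) := by
  have hl0 := hl.out
  have hne : lam ≠ 0 := hl0.ne'
  rw [Metric.continuous_iff]
  intro b ε hε
  refine ⟨ε / lam, by positivity, fun a ha => ?_⟩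
  rw [show dist (Scaled.mk lam a) (Scaled.mk lam b) = lam * dist a b from rfl]
  calc lam * dist a b < lam * (ε / lam) := mul_lt_mul_of_pos_left ha hl0
    _ = ε := by field_simp

/-- The identity as a homeomorphism between `X` and `Scaled lam X`. -/
noncomputable def Scaled.homeo (lam : ℝ) (X : Type*) [MetricSpace X] [Fact (0 < lam)] :
    X ≃ₜ Scaled lam X where
  toFun := Scaled.mk lam
  invFun := Scaled.unscale
  left_inv _ := rfl
  right_inv _ := rfl
  continuous_toFun := Scaled.continuous_mk
  continuous_invFun := Scaled.continuous_unscale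

instance {lam : ℝ} {X : Type*} [MetricSpace X] [Fact (0 < lam)] [CompactSpace X] :
    CompactSpace (Scaled lam X) :=
  (Scaled.homeo lam X).compactSpace

instance {lam : ℝ} {X : Type*} [Nonempty X] : Nonempty (Scaled lam X) := ‹Nonempty X›

/-
Pass through the intermediate space `μ·X`. The identity `λ·X → μ·X` distorts every distance
`d` by `|λ - μ|·d ≤ |λ - μ|·diam X`, so `d_GH(λ·X, μ·X) ≤ ½·|λ - μ|·diam X`. Scaling an optimal
Gromov–Hausdorff coupling of `X` and `Y` by `μ` gives a coupling of `μ·X` and `μ·Y` in which the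
Hausdorff distance of the images is `μ·d_GH(X, Y)`.
-/

open GromovHausdorff Set

theorem GromovHausdorff.ghDist_triangle (X Y Z : Type*)
    [MetricSpace X] [CompactSpace X] [Nonempty X] [MetricSpace Y] [CompactSpace Y] [Nonempty Y]
    [MetricSpace Z] [CompactSpace Z] [Nonempty Z] :
    ghDist X Z ≤ ghDist X Y + ghDist Y Z :=
  dist_triangle _ _ _

namespace Scaled

variable {X Y : Type*} [MetricSpace X] [MetricSpace Y] {mu : ℝ} [hmu : Fact (0 < mu)]

theorem dist_mk (x y : X) : dist (Scaled.mk mu x) (Scaled.mk mu y) = mu * dist x y := rfl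

theorem isometry_mk_comp {f : X → Y} (hf : Isometry f) :
    Isometry fun x : Scaled mu X => Scaled.mk mu (f x.unscale) :=
  Isometry.of_dist_eq fun a b => by rw [dist_mk, hf.dist_eq, dist_eq]

theorem infDist_mk_image_le (x : X) (t : Set X) :
    infDist (Scaled.mk mu x) (Scaled.mk mu '' t) ≤ mu * infDist x t := by
  rcases t.eq_empty_or_nonempty with rfl | ht
  · simp
  refine le_of_forall_gt fun r hr => ?_
  obtain ⟨y, hy, hxy⟩ := (infDist_lt_iff ht).1 ((lt_div_iff₀' hmu.out).2 hr)
  calc infDist (Scaled.mk mu x) (Scaled.mk mu '' t)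
      ≤ dist (Scaled.mk mu x) (Scaled.mk mu y) := infDist_le_dist_of_mem (mem_image_of_mem _ hy)
    _ = mu * dist x y := dist_mk x y
    _ < r := (lt_div_iff₀' hmu.out).1 hxy

theorem hausdorffDist_mk_image_le {s t : Set X} (hfin : hausdorffEDist s t ≠ ⊤) :
    hausdorffDist (Scaled.mk mu '' s) (Scaled.mk mu '' t) ≤ mu * hausdorffDist s t := by
  have hmu0 := hmu.out.le
  refine hausdorffDist_le_of_infDist (mul_nonneg hmu0 hausdorffDist_nonneg) ?_ ?_
  · rintro _ ⟨x, hx, rfl⟩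
    exact (infDist_mk_image_le x t).trans
      (mul_le_mul_of_nonneg_left (infDist_le_hausdorffDist_of_mem hx hfin) hmu0)
  · rintro _ ⟨y, hy, rfl⟩
    rw [hausdorffEDist_comm] at hfin
    rw [hausdorffDist_comm]
    exact (infDist_mk_image_le y s).trans
      (mul_le_mul_of_nonneg_left (infDist_le_hausdorffDist_of_mem hy hfin) hmu0)

end Scaled

theorem ghDist_scaled_self_le {X : Type*} [MetricSpace X] [CompactSpace X] [Nonempty X]
    (lam mu : ℝ) [Fact (0 < lam)] [Fact (0 < mu)] :
    ghDist (Scaled lam X) (Scaled mu X) ≤ 1 / 2 * |lam - mu| * diam (univ : Set X) := by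
  have distortion (x y : (univ : Set (Scaled lam X))) :
      |dist x y - dist (Scaled.mk mu x.1.unscale) (Scaled.mk mu y.1.unscale)|
        ≤ |lam - mu| * diam (univ : Set X) := by
    rw [Subtype.dist_eq, Scaled.dist_eq, Scaled.dist_mk, ← sub_mul, abs_mul,
      abs_of_nonneg dist_nonneg]
    exact mul_le_mul_of_nonneg_left
      (dist_le_diam_of_mem isCompact_univ.isBounded (mem_univ _) (mem_univ _)) (abs_nonneg _)
  have := ghDist_le_of_approx_subsets (fun x => Scaled.mk mu x.1.unscale)
    (fun x => ⟨x, mem_univ x, (dist_self x).le⟩)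
    (fun y => ⟨⟨Scaled.mk lam y.unscale, mem_univ _⟩, (dist_self y).le⟩) distortion
  linarith

theorem ghDist_scaled_scaled_le_mul {X Y : Type*} [MetricSpace X] [CompactSpace X] [Nonempty X]
    [MetricSpace Y] [CompactSpace Y] [Nonempty Y] (mu : ℝ) [Fact (0 < mu)] :
    ghDist (Scaled mu X) (Scaled mu Y) ≤ mu * ghDist X Y := by
  have hf := isometry_optimalGHInjl X Y
  have hg := isometry_optimalGHInjr X Y
  have hfin : hausdorffEDist (range (optimalGHInjl X Y)) (range (optimalGHInjr X Y)) ≠ ⊤ :=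
    hausdorffEDist_ne_top_of_nonempty_of_bounded (range_nonempty _) (range_nonempty _)
      (isCompact_range hf.continuous).isBounded (isCompact_range hg.continuous).isBounded
  calc ghDist (Scaled mu X) (Scaled mu Y)
      ≤ hausdorffDist (Scaled.mk mu '' range (optimalGHInjl X Y))
          (Scaled.mk mu '' range (optimalGHInjr X Y)) := by
        rw [← range_comp, ← range_comp]
        exact ghDist_le_hausdorffDist (Scaled.isometry_mk_comp hf) (Scaled.isometry_mk_comp hg)
    _ ≤ mu * ghDist X Y := by
        rw [← hausdorffDist_optimal]
        exact Scaled.hausdorffDist_mk_image_le hfin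

/-- For nonempty compact metric spaces `X`, `Y` and reals `λ, μ > 0`,
`d_GH(λ·X, μ·Y) ≤ (1/2)·|λ − μ|·diam X + μ·d_GH(X, Y)`. -/
theorem ghDist_scaled_le {X : Type} {Y : Type}
    [MetricSpace X] [CompactSpace X] [Nonempty X]
    [MetricSpace Y] [CompactSpace Y] [Nonempty Y]
    (lam mu : ℝ) [Fact (0 < lam)] [Fact (0 < mu)] :
    GromovHausdorff.ghDist (Scaled lam X) (Scaled mu Y) ≤
      1 / 2 * |lam - mu| * Metric.diam (Set.univ : Set X) +
        mu * GromovHausdorff.ghDist X Y :=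
  (ghDist_triangle _ (Scaled mu X) _).trans
    (add_le_add (ghDist_scaled_self_le lam mu) (ghDist_scaled_scaled_le_mul mu))
end

section
/- Let A and B be points of GHSpace with diam(A) > 0 and diam(B) > 0, and let ε > 0 satisfy 2ε < min{diam(A), diam(B)}. Let γ : [a,b] → GHSpace be a continuous curve with γ(a) = A, γ(b) = B whose length is at most dist(A,B) + ε. Then γ(t) ≠ Δ1 for every t ∈ [a,b], where Δ1 is the isometry class of the one-point metric space. -/
open GromovHausdorff

/-- The point of `GHSpace` represented by the one-point metric space. -/
noncomputable def Delta1 : GHSpace := toGHSpace PUnit.{1}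

/-- The Gromov–Hausdorff distance between two spaces whose diameters are at most `2r`
is at most `r`, provided `0 < r`.  Proved by putting the metric on `X ⊕ Y` with all
cross-distances equal to `r`. -/
lemma ghDist_le_of_diam_le {X : Type*} {Y : Type*}
    [MetricSpace X] [CompactSpace X] [Nonempty X]
    [MetricSpace Y] [CompactSpace Y] [Nonempty Y] {r : ℝ} (hr : 0 < r)
    (hX : Metric.diam (Set.univ : Set X) ≤ 2 * r)
    (hY : Metric.diam (Set.univ : Set Y) ≤ 2 * r) :
    ghDist X Y ≤ r := by
  classical
  let d : X ⊕ Y → X ⊕ Y → ℝ := fun p q =>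
    match p, q with
    | .inl x, .inl y => dist x y
    | .inr x, .inr y => dist x y
    | _, _ => r
  have hboundX : ∀ x y : X, dist x y ≤ 2 * r := fun x y =>
    (Metric.dist_le_diam_of_mem isCompact_univ.isBounded (Set.mem_univ x)
      (Set.mem_univ y)).trans hX
  have hboundY : ∀ x y : Y, dist x y ≤ 2 * r := fun x y =>
    (Metric.dist_le_diam_of_mem isCompact_univ.isBounded (Set.mem_univ x)
      (Set.mem_univ y)).trans hY
  letI m : MetricSpace (X ⊕ Y) :=
    { dist := d
      dist_self := by rintro (x | x) <;> simp [d]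
      dist_comm := by
        rintro (x | x) (y | y) <;> simp [d, dist_comm]
      dist_triangle := by
        rintro (x | x) (y | y) (z | z) <;>
          simp only [d] <;>
          first
            | exact dist_triangle _ _ _
            | (have := dist_nonneg (x := x) (y := y); linarith)
            | (have := dist_nonneg (x := y) (y := z); linarith)
            | (have := hboundX x z; linarith)
            | (have := hboundY x z; linarith)
            | linarith
      eq_of_dist_eq_zero := by
        rintro (x | x) (y | y) h
        · exact congrArg Sum.inl (eq_of_dist_eq_zero h)
        · exact absurd h hr.ne'
        · exact absurd h hr.ne'
        · exact congrArg Sum.inr (eq_of_dist_eq_zero h) }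
  have isoml : Isometry (Sum.inl : X → X ⊕ Y) := Isometry.of_dist_eq fun _ _ => rfl
  have isomr : Isometry (Sum.inr : Y → X ⊕ Y) := Isometry.of_dist_eq fun _ _ => rfl
  have hd : Metric.hausdorffDist (Set.range (Sum.inl : X → X ⊕ Y))
      (Set.range (Sum.inr : Y → X ⊕ Y)) ≤ r := by
    apply Metric.hausdorffDist_le_of_mem_dist hr.le
    · rintro _ ⟨x, rfl⟩
      exact ⟨Sum.inr (Classical.arbitrary Y), Set.mem_range_self _, le_of_eq rfl⟩
    · rintro _ ⟨y, rfl⟩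
      exact ⟨Sum.inl (Classical.arbitrary X), Set.mem_range_self _, le_of_eq rfl⟩
  exact (ghDist_le_hausdorffDist isoml isomr).trans hd

lemma subsingleton_delta1_rep : Subsingleton Delta1.Rep := by
  have h : toGHSpace Delta1.Rep = toGHSpace PUnit.{1} := by
    rw [GHSpace.toGHSpace_rep]; rfl
  obtain ⟨e⟩ := toGHSpace_eq_toGHSpace_iff_isometryEquiv.1 h
  exact ⟨fun x y => e.injective (Subsingleton.elim _ _)⟩

/-- Lower bound: the distance of any point of `GHSpace` to the one-point space is at
least half its diameter. -/
lemma diam_le_two_dist_delta1 (p : GHSpace) :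
    Metric.diam (Set.univ : Set p.Rep) ≤ 2 * dist p Delta1 := by
  obtain ⟨Φ, Ψ, hΦ, hΨ, hEq⟩ := ghDist_eq_hausdorffDist p.Rep Delta1.Rep
  have hsub : Subsingleton Delta1.Rep := subsingleton_delta1_rep
  obtain ⟨z0⟩ := (inferInstance : Nonempty Delta1.Rep)
  have hrange : Set.range Ψ = {Ψ z0} := by
    ext w
    constructor
    · rintro ⟨u, rfl⟩
      simp [Subsingleton.elim u z0]
    · rintro rfl
      exact Set.mem_range_self _
  have hne : EMetric.hausdorffEdist (Set.range Φ) (Set.range Ψ) ≠ ⊤ :=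
    Metric.hausdorffEdist_ne_top_of_nonempty_of_bounded (Set.range_nonempty _)
      (Set.range_nonempty _) (isCompact_range hΦ.continuous).isBounded
      (isCompact_range hΨ.continuous).isBounded
  have hdist : dist p Delta1 = Metric.hausdorffDist (Set.range Φ) (Set.range Ψ) := by
    rw [dist_ghDist]; exact hEq
  rw [hrange] at hne hdist
  have key : ∀ x y : p.Rep, dist x y ≤ 2 * dist p Delta1 := by
    intro x y
    have h1 : dist (Φ x) (Ψ z0) ≤ Metric.hausdorffDist (Set.range Φ) {Ψ z0} := by
      have := Metric.infDist_le_hausdorffDist_of_mem (Set.mem_range_self x) hne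
      rwa [Metric.infDist_singleton] at this
    have h2 : dist (Φ y) (Ψ z0) ≤ Metric.hausdorffDist (Set.range Φ) {Ψ z0} := by
      have := Metric.infDist_le_hausdorffDist_of_mem (Set.mem_range_self y) hne
      rwa [Metric.infDist_singleton] at this
    calc dist x y = dist (Φ x) (Φ y) := (hΦ.dist_eq x y).symm
      _ ≤ dist (Φ x) (Ψ z0) + dist (Ψ z0) (Φ y) := dist_triangle _ _ _
      _ = dist (Φ x) (Ψ z0) + dist (Φ y) (Ψ z0) := by rw [dist_comm (Ψ z0)]
      _ ≤ 2 * dist p Delta1 := by rw [hdist]; linarith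
  exact Metric.diam_le_of_forall_dist_le
    (mul_nonneg (by norm_num) dist_nonneg) fun x _ y _ => key x y

/-- An `ε`-shortest curve between two points of `GHSpace` of positive
diameter does not pass through the one-point space, provided
`2ε < min (diam A) (diam B)`.  The length of the curve is its total variation
(the supremum of lengths of inscribed "polygonal lines"). -/
theorem eps_shortest_curve_avoids_onePoint (a b : ℝ) (hab : a ≤ b)
    (A B : GHSpace)
    (hA : 0 < Metric.diam (Set.univ : Set A.Rep))
    (hB : 0 < Metric.diam (Set.univ : Set B.Rep))
    (ε : ℝ) (hε : 0 < ε)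
    (hε2 : 2 * ε < min (Metric.diam (Set.univ : Set A.Rep))
      (Metric.diam (Set.univ : Set B.Rep)))
    (γ : ℝ → GHSpace) (hγ : ContinuousOn γ (Set.Icc a b))
    (hγa : γ a = A) (hγb : γ b = B)
    (hlen : eVariationOn γ (Set.Icc a b) ≤ ENNReal.ofReal (dist A B + ε)) :
    ∀ t ∈ Set.Icc a b, γ t ≠ Delta1 := by
  intro t ht hbad
  set dA := Metric.diam (Set.univ : Set A.Rep) with hdA
  set dB := Metric.diam (Set.univ : Set B.Rep) with hdB
  -- split the variation at `t`
  have hsplit := eVariationOn.Icc_add_Icc γ (s := Set.univ) ht.1 ht.2 (Set.mem_univ t)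
  simp only [Set.univ_inter] at hsplit
  have h1 : ENNReal.ofReal (dist A Delta1) ≤ eVariationOn γ (Set.Icc a t) := by
    have := eVariationOn.edist_le γ (s := Set.Icc a t)
      (x := a) (y := t) ⟨le_rfl, ht.1⟩ ⟨ht.1, le_rfl⟩
    rwa [hγa, hbad, edist_dist] at this
  have h2 : ENNReal.ofReal (dist Delta1 B) ≤ eVariationOn γ (Set.Icc t b) := by
    have := eVariationOn.edist_le γ (s := Set.Icc t b)
      (x := t) (y := b) ⟨le_rfl, ht.2⟩ ⟨ht.2, le_rfl⟩
    rwa [hγb, hbad, edist_dist] at this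
  have E1 : ENNReal.ofReal (dist A Delta1 + dist Delta1 B)
      ≤ ENNReal.ofReal (dist A B + ε) := by
    rw [ENNReal.ofReal_add dist_nonneg dist_nonneg]
    calc ENNReal.ofReal (dist A Delta1) + ENNReal.ofReal (dist Delta1 B)
        ≤ eVariationOn γ (Set.Icc a t) + eVariationOn γ (Set.Icc t b) := add_le_add h1 h2
      _ = eVariationOn γ (Set.Icc a b) := hsplit
      _ ≤ ENNReal.ofReal (dist A B + ε) := hlen
  have E2 : dist A Delta1 + dist Delta1 B ≤ dist A B + ε := by
    rwa [ENNReal.ofReal_le_ofReal_iff (add_nonneg dist_nonneg hε.le)] at E1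
  -- upper bound on `dist A B`
  have E3 : dist A B ≤ max dA dB / 2 := by
    rw [dist_ghDist]
    refine ghDist_le_of_diam_le (by positivity) ?_ ?_
    · have := le_max_left dA dB; rw [← hdA]; linarith
    · have := le_max_right dA dB; rw [← hdB]; linarith
  have LA : dA ≤ 2 * dist A Delta1 := diam_le_two_dist_delta1 A
  have LB : dB ≤ 2 * dist Delta1 B := by
    rw [dist_comm]; exact diam_le_two_dist_delta1 B
  rcases le_total dA dB with h | h
  · rw [max_eq_right h] at E3
    rw [min_eq_left h] at hε2
    linarith
  · rw [max_eq_left h] at E3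
    rw [min_eq_right h] at hε2
    linarith
end

section
/- For every real r > 0, the sphere S_r(Δ1) = { X ∈ GHSpace : dist(X, Δ1) = r } of radius r centered at the one-point space is a path-connected subset of GHSpace. -/
open GromovHausdorff

open Metric Set TopologicalSpace Bornology

noncomputable section

theorem ghDist_le_of_surjective {A : Type*} {B : Type*}
    [MetricSpace A] [CompactSpace A] [Nonempty A]
    [MetricSpace B] [CompactSpace B] [Nonempty B]
    (g : A → B) (hg : Function.Surjective g) {ε : ℝ} (hε : 0 < ε)
    (H : ∀ x y : A, |dist x y - dist (g x) (g y)| ≤ 2 * ε) :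
    dist (toGHSpace A) (toGHSpace B) ≤ ε := by
  letI Z : MetricSpace (A ⊕ B) := glueMetricApprox (id : A → A) g ε hε (by simpa using H)
  have hl : Isometry (Sum.inl : A → A ⊕ B) := Isometry.of_dist_eq fun x y => rfl
  have hr : Isometry (Sum.inr : B → A ⊕ B) := Isometry.of_dist_eq fun x y => rfl
  have key : ∀ x : A, dist (Sum.inl x : A ⊕ B) (Sum.inr (g x)) = ε := fun x =>
    glueDist_glued_points (id : A → A) g ε x
  have hd : hausdorffDist (range (Sum.inl : A → A ⊕ B)) (range (Sum.inr : B → A ⊕ B)) ≤ ε := by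
    apply hausdorffDist_le_of_mem_dist hε.le
    · rintro _ ⟨x, rfl⟩; exact ⟨Sum.inr (g x), mem_range_self _, (key x).le⟩
    · rintro _ ⟨y, rfl⟩
      obtain ⟨x, rfl⟩ := hg y
      exact ⟨Sum.inl x, mem_range_self _, by rw [dist_comm]; exact (key x).le⟩
  exact le_trans (ghDist_le_hausdorffDist hl hr) hd

theorem dist_toGHSpace_delta1 (A : Type*) [MetricSpace A] [CompactSpace A] [Nonempty A] :
    dist (toGHSpace A) Delta1 = diam (univ : Set A) / 2 := by
  have hbd : IsBounded (univ : Set A) := isCompact_univ.isBounded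
  have hD : (0:ℝ) ≤ diam (univ : Set A) := diam_nonneg
  have upper : dist (toGHSpace A) Delta1 ≤ diam (univ : Set A) / 2 := by
    refine le_of_forall_gt_imp_ge_of_dense fun ε hε => ?_
    have hε0 : 0 < ε := lt_of_le_of_lt (by linarith) hε
    refine ghDist_le_of_surjective (fun _ : A => PUnit.unit) (fun y => ⟨Classical.arbitrary A, rfl⟩)
      hε0 fun x y => ?_
    have h1 : dist x y ≤ diam (univ : Set A) := dist_le_diam_of_mem hbd (mem_univ _) (mem_univ _)
    have h2 : dist PUnit.unit PUnit.unit = 0 := dist_self _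
    rw [h2]
    rw [abs_of_nonneg (by simpa using dist_nonneg)]
    linarith
  have lower : diam (univ : Set A) ≤ 2 * dist (toGHSpace A) Delta1 := by
    obtain ⟨Φ, Ψ, hΦ, hΨ, hgh⟩ := ghDist_eq_hausdorffDist A PUnit.{1}
    have hgh' : ghDist A PUnit.{1} = dist (toGHSpace A) Delta1 := rfl
    set z := Ψ PUnit.unit with hz
    have hrΨ : range Ψ = {z} := by
      rw [Set.range_unique]
    have hfin : EMetric.hausdorffEdist (range Φ) (range Ψ) ≠ ⊤ :=
      hausdorffEdist_ne_top_of_nonempty_of_bounded (range_nonempty _) (range_nonempty _)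
        (isCompact_range hΦ.continuous).isBounded (isCompact_range hΨ.continuous).isBounded
    have hpt : ∀ x : A, dist (Φ x) z ≤ dist (toGHSpace A) Delta1 := by
      intro x
      have := infDist_le_hausdorffDist_of_mem (mem_range_self x) hfin
      rw [hrΨ] at hgh
      rwa [hrΨ, infDist_singleton, ← hgh, hgh'] at this
    refine diam_le_of_forall_dist_le (by positivity) fun x _ y _ => ?_
    calc dist x y = dist (Φ x) (Φ y) := (hΦ.dist_eq x y).symm
      _ ≤ dist (Φ x) z + dist z (Φ y) := dist_triangle _ _ _
      _ ≤ dist (toGHSpace A) Delta1 + dist (toGHSpace A) Delta1 := by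
          refine add_le_add (hpt x) ?_
          rw [dist_comm]; exact hpt y
      _ = 2 * dist (toGHSpace A) Delta1 := by ring
  linarith

/-- The space `X` with interpolated distance between `dist` and the pullback pseudometric
of `x ↦ dist x p`. -/
def Interp (X : Type*) [PseudoMetricSpace X] (p : X) (t : unitInterval) : Type _ := X

namespace Interp

variable {X : Type*} [PseudoMetricSpace X] {p : X} {t : unitInterval}

/-- Identity map from `X` to `Interp X p t`. -/
def mk (p : X) (t : unitInterval) (x : X) : Interp X p t := x

/-- Identity map from `Interp X p t` to `X`. -/
def toX (x : Interp X p t) : X := x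

instance : PseudoMetricSpace (Interp X p t) where
  dist x y := (1 - (t:ℝ)) * dist x.toX y.toX + (t:ℝ) * |dist x.toX p - dist y.toX p|
  dist_self x := by simp
  dist_comm x y := by
    show (1 - (t:ℝ)) * dist x.toX y.toX + (t:ℝ) * |dist x.toX p - dist y.toX p|
      = (1 - (t:ℝ)) * dist y.toX x.toX + (t:ℝ) * |dist y.toX p - dist x.toX p|
    rw [dist_comm x.toX, abs_sub_comm]
  dist_triangle x y z := by
    show (1 - (t:ℝ)) * dist x.toX z.toX + (t:ℝ) * |dist x.toX p - dist z.toX p|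
      ≤ ((1 - (t:ℝ)) * dist x.toX y.toX + (t:ℝ) * |dist x.toX p - dist y.toX p|)
        + ((1 - (t:ℝ)) * dist y.toX z.toX + (t:ℝ) * |dist y.toX p - dist z.toX p|)
    have h1 : dist x.toX z.toX ≤ dist x.toX y.toX + dist y.toX z.toX := dist_triangle _ _ _
    have h2 : |dist x.toX p - dist z.toX p| ≤
        |dist x.toX p - dist y.toX p| + |dist y.toX p - dist z.toX p| := abs_sub_le _ _ _
    have ht0 : (0:ℝ) ≤ t := t.2.1
    have ht1 : (t:ℝ) ≤ 1 := t.2.2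
    nlinarith [h1, h2]

theorem dist_mk (x y : X) :
    dist (mk p t x) (mk p t y) = (1 - (t:ℝ)) * dist x y + (t:ℝ) * |dist x p - dist y p| := rfl

theorem lipschitz_mk (p : X) (t : unitInterval) : LipschitzWith 1 (mk p t) := by
  refine LipschitzWith.of_dist_le_mul fun x y => ?_
  rw [dist_mk, NNReal.coe_one, one_mul]
  have h := abs_dist_sub_le x y p
  have ht0 : (0:ℝ) ≤ t := t.2.1
  have ht1 : (t:ℝ) ≤ 1 := t.2.2
  nlinarith [dist_nonneg (x := x) (y := y)]

instance [Nonempty X] : Nonempty (Interp X p t) := ⟨mk p t (Classical.arbitrary X)⟩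

instance [CompactSpace X] : CompactSpace (Interp X p t) := by
  constructor
  have hr : range (mk p t) = univ := range_eq_univ.2 fun y => ⟨y, rfl⟩
  rw [← hr]
  exact isCompact_range (lipschitz_mk p t).continuous

end Interp

theorem exists_dist_eq_diam (A : Type*) [MetricSpace A] [CompactSpace A] [Nonempty A] :
    ∃ x y : A, dist x y = diam (univ : Set A) := by
  obtain ⟨⟨x, y⟩, -, hmax⟩ := isCompact_univ.exists_isMaxOn univ_nonempty
    (continuous_dist.continuousOn : ContinuousOn (fun z : A × A => dist z.1 z.2) univ)
  refine ⟨x, y, le_antisymm (dist_le_diam_of_mem isCompact_univ.isBounded (mem_univ _) (mem_univ _))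
    (diam_le_of_forall_dist_le dist_nonneg fun a _ b _ => hmax (mem_univ (a, b)))⟩

instance SeparationQuotient.instCompactSpace' {Y : Type*} [TopologicalSpace Y] [CompactSpace Y] :
    CompactSpace (SeparationQuotient Y) := by
  constructor
  rw [← Set.range_eq_univ.2 SeparationQuotient.surjective_mk]
  exact isCompact_range SeparationQuotient.continuous_mk
section Gamma1

variable {X : Type*} [MetricSpace X] [CompactSpace X] [Nonempty X]

theorem diam_sepQuot_interp (p q : X) (t : unitInterval) {r : ℝ} (hr : 0 < r)
    (hdiam : diam (univ : Set X) = 2 * r) (hpq : dist p q = 2 * r) :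
    diam (univ : Set (SeparationQuotient (Interp X p t))) = 2 * r := by
  have hbd : IsBounded (univ : Set X) := isCompact_univ.isBounded
  have hdle : ∀ x y : X, dist x y ≤ 2 * r := fun x y => by
    rw [← hdiam]; exact dist_le_diam_of_mem hbd (mem_univ _) (mem_univ _)
  have ht0 : (0:ℝ) ≤ t := t.2.1
  have ht1 : (t:ℝ) ≤ 1 := t.2.2
  have hdistmk : ∀ x y : X,
      dist (SeparationQuotient.mk (Interp.mk p t x)) (SeparationQuotient.mk (Interp.mk p t y))
        = (1 - (t:ℝ)) * dist x y + (t:ℝ) * |dist x p - dist y p| := fun x y => by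
    rw [SeparationQuotient.dist_mk, Interp.dist_mk]
  refine le_antisymm ?_ ?_
  · refine diam_le_of_forall_dist_le (by positivity) fun a _ b _ => ?_
    obtain ⟨x', rfl⟩ := SeparationQuotient.surjective_mk a
    obtain ⟨y', rfl⟩ := SeparationQuotient.surjective_mk b
    have hx : x' = Interp.mk p t x'.toX := rfl
    have hy : y' = Interp.mk p t y'.toX := rfl
    rw [hx, hy, hdistmk]
    have h1 : dist x'.toX y'.toX ≤ 2 * r := hdle _ _
    have h2 : |dist x'.toX p - dist y'.toX p| ≤ dist x'.toX y'.toX := abs_dist_sub_le _ _ _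
    nlinarith
  · have : dist (SeparationQuotient.mk (Interp.mk p t p)) (SeparationQuotient.mk (Interp.mk p t q))
        = 2 * r := by
      rw [hdistmk, dist_self, dist_comm q p, hpq, zero_sub, abs_neg,
        abs_of_nonneg (by positivity)]
      ring
    rw [← this]
    exact dist_le_diam_of_mem isCompact_univ.isBounded (mem_univ _) (mem_univ _)

theorem dist_gamma1_le (p : X) {r : ℝ} (hr : 0 < r)
    (hdiam : diam (univ : Set X) = 2 * r) {s t : unitInterval} (hst : s ≤ t) :
    dist (toGHSpace (SeparationQuotient (Interp X p s)))
      (toGHSpace (SeparationQuotient (Interp X p t))) ≤ r * ((t:ℝ) - s) := by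
  rcases eq_or_lt_of_le hst with rfl | hlt
  · simp
  have hst' : (s:ℝ) < t := hlt
  have hs1 : (s:ℝ) < 1 := lt_of_lt_of_le hst' t.2.2
  have hbd : IsBounded (univ : Set X) := isCompact_univ.isBounded
  have hdle : ∀ x y : X, dist x y ≤ 2 * r := fun x y => by
    rw [← hdiam]; exact dist_le_diam_of_mem hbd (mem_univ _) (mem_univ _)
  have hwd : ∀ x y : Interp X p s, Inseparable x y →
      SeparationQuotient.mk (Interp.mk p t x.toX) = SeparationQuotient.mk (Interp.mk p t y.toX) := by
    intro x y hxy
    rw [Metric.inseparable_iff] at hxy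
    have hxy' : (1 - (s:ℝ)) * dist x.toX y.toX + (s:ℝ) * |dist x.toX p - dist y.toX p| = 0 := hxy
    have h2 : |dist x.toX p - dist y.toX p| ≤ dist x.toX y.toX := abs_dist_sub_le _ _ _
    have hd0 : dist x.toX y.toX = 0 := by
      nlinarith [dist_nonneg (x := x.toX) (y := y.toX), abs_nonneg (dist x.toX p - dist y.toX p),
        s.2.1]
    rw [SeparationQuotient.mk_eq_mk, Metric.inseparable_iff]
    show (1 - (t:ℝ)) * dist x.toX y.toX + (t:ℝ) * |dist x.toX p - dist y.toX p| = 0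
    have : |dist x.toX p - dist y.toX p| = 0 := le_antisymm (hd0 ▸ h2) (abs_nonneg _)
    rw [hd0, this]; ring
  set g : SeparationQuotient (Interp X p s) → SeparationQuotient (Interp X p t) :=
    SeparationQuotient.lift (fun x => SeparationQuotient.mk (Interp.mk p t x.toX)) hwd with hg
  have hgmk : ∀ x : X, g (SeparationQuotient.mk (Interp.mk p s x))
      = SeparationQuotient.mk (Interp.mk p t x) := fun x => rfl
  have hsurj : Function.Surjective g := by
    intro a
    obtain ⟨x', rfl⟩ := SeparationQuotient.surjective_mk a
    exact ⟨SeparationQuotient.mk (Interp.mk p s x'.toX), rfl⟩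
  have hε : 0 < r * ((t:ℝ) - s) := by nlinarith
  refine ghDist_le_of_surjective g hsurj hε ?_
  intro a b
  obtain ⟨x', rfl⟩ := SeparationQuotient.surjective_mk a
  obtain ⟨y', rfl⟩ := SeparationQuotient.surjective_mk b
  have hx : x' = Interp.mk p s x'.toX := rfl
  have hy : y' = Interp.mk p s y'.toX := rfl
  rw [hx, hy, hgmk, hgmk, SeparationQuotient.dist_mk, SeparationQuotient.dist_mk,
    Interp.dist_mk, Interp.dist_mk]
  have h1 : dist x'.toX y'.toX ≤ 2 * r := hdle _ _
  have h2 : |dist x'.toX p - dist y'.toX p| ≤ dist x'.toX y'.toX := abs_dist_sub_le _ _ _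
  have habs : (1 - (s:ℝ)) * dist x'.toX y'.toX + (s:ℝ) * |dist x'.toX p - dist y'.toX p|
      - ((1 - (t:ℝ)) * dist x'.toX y'.toX + (t:ℝ) * |dist x'.toX p - dist y'.toX p|)
      = ((t:ℝ) - s) * (dist x'.toX y'.toX - |dist x'.toX p - dist y'.toX p|) := by ring
  rw [habs, abs_of_nonneg (by nlinarith [abs_nonneg (dist x'.toX p - dist y'.toX p)])]
  nlinarith [abs_nonneg (dist x'.toX p - dist y'.toX p)]

theorem gamma1_zero (p : X) :
    toGHSpace (SeparationQuotient (Interp X p 0)) = toGHSpace X := by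
  rw [toGHSpace_eq_toGHSpace_iff_isometryEquiv]
  have hiso : Isometry (fun x : X => SeparationQuotient.mk (Interp.mk p 0 x)) := by
    refine Isometry.of_dist_eq fun x y => ?_
    rw [SeparationQuotient.dist_mk, Interp.dist_mk]
    norm_num
  have hsurj : Function.Surjective (fun x : X => SeparationQuotient.mk (Interp.mk p 0 x)) := by
    intro a
    obtain ⟨x', rfl⟩ := SeparationQuotient.surjective_mk a
    exact ⟨x'.toX, rfl⟩
  exact ⟨(IsometryEquiv.mk (Equiv.ofBijective _ ⟨hiso.injective, hsurj⟩) hiso).symm⟩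

end Gamma1
section Gamma2

variable {X : Type*} [MetricSpace X] [CompactSpace X] [Nonempty X]

/-- The compact subsets of `ℝ` interpolating between `range (dist · p)` and `Icc 0 (2r)`. -/
def Kfam (X : Type*) [MetricSpace X] [CompactSpace X] (p : X) (r : ℝ) (hr : 0 < r)
    (t : unitInterval) : NonemptyCompacts ℝ where
  carrier := (range fun x : X => dist x p) ∪ Icc 0 (2 * r * t)
  isCompact' := ((isCompact_range (by continuity)).union isCompact_Icc)
  nonempty' := ⟨0, Or.inr ⟨le_refl 0, by have := t.2.1; nlinarith⟩⟩

theorem Kfam_mem_bounds (p : X) {r : ℝ} (hr : 0 < r) (hdiam : diam (univ : Set X) = 2 * r)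
    (t : unitInterval) : ∀ a ∈ (Kfam X p r hr t : Set ℝ), a ∈ Icc 0 (2 * r) := by
  rintro a (⟨x, rfl⟩ | ha)
  · refine ⟨dist_nonneg, ?_⟩
    rw [← hdiam]
    exact dist_le_diam_of_mem isCompact_univ.isBounded (mem_univ _) (mem_univ _)
  · refine ⟨ha.1, le_trans ha.2 ?_⟩
    have ht1 : (t:ℝ) ≤ 1 := t.2.2
    nlinarith

theorem Kfam_dist_le (p : X) {r : ℝ} (hr : 0 < r) {s t : unitInterval} (hst : s ≤ t) :
    dist (Kfam X p r hr s) (Kfam X p r hr t) ≤ 2 * r * ((t:ℝ) - s) := by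
  have hst' : (s:ℝ) ≤ t := hst
  rw [NonemptyCompacts.dist_eq]
  refine hausdorffDist_le_of_mem_dist (by nlinarith) ?_ ?_
  · rintro x hx
    refine ⟨x, ?_, by rw [dist_self]; nlinarith⟩
    rcases hx with hx | hx
    · exact Or.inl hx
    · exact Or.inr ⟨hx.1, le_trans hx.2 (by nlinarith)⟩
  · rintro y (hy | hy)
    · exact ⟨y, Or.inl hy, by rw [dist_self]; nlinarith⟩
    · by_cases hle : y ≤ 2 * r * s
      · exact ⟨y, Or.inr ⟨hy.1, hle⟩, by rw [dist_self]; nlinarith⟩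
      · refine ⟨2 * r * s, Or.inr ⟨by nlinarith [s.2.1], le_refl _⟩, ?_⟩
        rw [Real.dist_eq, abs_of_nonneg (by nlinarith)]
        nlinarith [hy.2]

theorem diam_Kfam (p q : X) {r : ℝ} (hr : 0 < r) (hdiam : diam (univ : Set X) = 2 * r)
    (hpq : dist p q = 2 * r) (t : unitInterval) :
    diam (univ : Set (Kfam X p r hr t : Set ℝ)) = 2 * r := by
  have hb := Kfam_mem_bounds p hr hdiam t
  haveI : CompactSpace (Kfam X p r hr t : Set ℝ) :=
    isCompact_iff_compactSpace.mp (Kfam X p r hr t).isCompact'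
  refine le_antisymm ?_ ?_
  · refine diam_le_of_forall_dist_le (by positivity) fun a _ b _ => ?_
    have ha := hb a.1 a.2
    have hbb := hb b.1 b.2
    rw [Subtype.dist_eq, Real.dist_eq, abs_le]
    constructor <;> [nlinarith [ha.1, ha.2, hbb.1, hbb.2]; nlinarith [ha.1, ha.2, hbb.1, hbb.2]]
  · have h0 : (0:ℝ) ∈ (Kfam X p r hr t : Set ℝ) := Or.inl ⟨p, dist_self p⟩
    have h2r : (2*r:ℝ) ∈ (Kfam X p r hr t : Set ℝ) := Or.inl ⟨q, show dist q p = 2*r by rw [dist_comm]; exact hpq⟩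
    have : dist (⟨0, h0⟩ : (Kfam X p r hr t : Set ℝ)) ⟨2*r, h2r⟩ = 2 * r := by
      rw [Subtype.dist_eq, Real.dist_eq, zero_sub, abs_neg, abs_of_nonneg (by positivity)]
    rw [← this]
    exact dist_le_diam_of_mem isCompact_univ.isBounded (mem_univ _) (mem_univ _)

theorem gamma1_one_eq_Kfam_zero (p : X) {r : ℝ} (hr : 0 < r) :
    toGHSpace (SeparationQuotient (Interp X p 1)) = (Kfam X p r hr 0).toGHSpace := by
  rw [NonemptyCompacts.toGHSpace, toGHSpace_eq_toGHSpace_iff_isometryEquiv]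
  have hwd : ∀ x y : Interp X p 1, Inseparable x y →
      (⟨dist x.toX p, Or.inl (mem_range_self _)⟩ : (Kfam X p r hr 0 : Set ℝ))
        = ⟨dist y.toX p, Or.inl (mem_range_self _)⟩ := by
    intro x y hxy
    rw [Metric.inseparable_iff] at hxy
    have hxy' : (1 - ((1:unitInterval):ℝ)) * dist x.toX y.toX
        + ((1:unitInterval):ℝ) * |dist x.toX p - dist y.toX p| = 0 := hxy
    have : |dist x.toX p - dist y.toX p| = 0 := by
      simp only [Set.Icc.coe_one] at hxy'; linarith [abs_nonneg (dist x.toX p - dist y.toX p)]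
    exact Subtype.ext (by linarith [abs_eq_zero.1 this, sub_eq_zero.1 (abs_eq_zero.1 this)])
  set φ : SeparationQuotient (Interp X p 1) → (Kfam X p r hr 0 : Set ℝ) :=
    SeparationQuotient.lift
      (fun x : Interp X p 1 => (⟨dist x.toX p, Or.inl (mem_range_self _)⟩ :
        (Kfam X p r hr 0 : Set ℝ))) hwd with hφ
  have hiso : Isometry φ := by
    refine Isometry.of_dist_eq fun a b => ?_
    obtain ⟨x', rfl⟩ := SeparationQuotient.surjective_mk a
    obtain ⟨y', rfl⟩ := SeparationQuotient.surjective_mk b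
    rw [SeparationQuotient.dist_mk]
    show dist (⟨dist x'.toX p, _⟩ : (Kfam X p r hr 0 : Set ℝ)) ⟨dist y'.toX p, _⟩ = _
    rw [Subtype.dist_eq, Real.dist_eq]
    show |dist x'.toX p - dist y'.toX p|
      = (1 - ((1:unitInterval):ℝ)) * dist x'.toX y'.toX
        + ((1:unitInterval):ℝ) * |dist x'.toX p - dist y'.toX p|
    simp
  have hsurj : Function.Surjective φ := by
    rintro ⟨b, hb | hb⟩
    · obtain ⟨x, rfl⟩ := hb
      exact ⟨SeparationQuotient.mk (Interp.mk p 1 x), rfl⟩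
    · have hb0 : b = 0 := le_antisymm (le_trans hb.2 (by norm_num)) hb.1
      refine ⟨SeparationQuotient.mk (Interp.mk p 1 p), ?_⟩
      show (⟨dist p p, _⟩ : (Kfam X p r hr 0 : Set ℝ)) = _
      exact Subtype.ext (by simp [hb0])
  exact ⟨IsometryEquiv.mk (Equiv.ofBijective _ ⟨hiso.injective, hsurj⟩) hiso⟩

end Gamma2

/-- The segment `[0, 2r]` as a nonempty compact subset of `ℝ`. -/
def KIcc (r : ℝ) (hr : 0 < r) : NonemptyCompacts ℝ where
  carrier := Icc 0 (2 * r)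
  isCompact' := isCompact_Icc
  nonempty' := ⟨0, le_refl 0, by linarith⟩

theorem Kfam_one {X : Type*} [MetricSpace X] [CompactSpace X] [Nonempty X] (p : X) {r : ℝ}
    (hr : 0 < r) (hdiam : diam (univ : Set X) = 2 * r) :
    Kfam X p r hr 1 = KIcc r hr := by
  have hsub : (range fun x : X => dist x p) ⊆ Icc 0 (2 * r) := by
    rintro a ⟨x, rfl⟩
    exact ⟨dist_nonneg, hdiam ▸ dist_le_diam_of_mem isCompact_univ.isBounded
      (mem_univ _) (mem_univ _)⟩
  apply NonemptyCompacts.ext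
  show (range fun x : X => dist x p) ∪ Icc 0 (2 * r * ((1:unitInterval):ℝ)) = Icc 0 (2 * r)
  rw [Set.Icc.coe_one, mul_one, union_eq_self_of_subset_left hsub]

theorem dist_KIcc_delta1 (r : ℝ) (hr : 0 < r) :
    dist (KIcc r hr).toGHSpace Delta1 = r := by
  haveI : CompactSpace (KIcc r hr : Set ℝ) :=
    isCompact_iff_compactSpace.mp (KIcc r hr).isCompact'
  haveI : Nonempty (KIcc r hr : Set ℝ) := ⟨⟨0, le_refl 0, by linarith⟩⟩
  rw [NonemptyCompacts.toGHSpace, dist_toGHSpace_delta1]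
  have hdiam : diam (univ : Set (KIcc r hr : Set ℝ)) = 2 * r := by
    refine le_antisymm ?_ ?_
    · refine diam_le_of_forall_dist_le (by positivity) fun a _ b _ => ?_
      have ha : a.1 ∈ Icc (0:ℝ) (2*r) := a.2
      have hb : b.1 ∈ Icc (0:ℝ) (2*r) := b.2
      rw [Subtype.dist_eq, Real.dist_eq, abs_le]
      constructor <;> [nlinarith [ha.1, ha.2, hb.1, hb.2]; nlinarith [ha.1, ha.2, hb.1, hb.2]]
    · have h0 : (0:ℝ) ∈ (KIcc r hr : Set ℝ) := ⟨le_refl 0, by linarith⟩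
      have h2r : (2*r:ℝ) ∈ (KIcc r hr : Set ℝ) := ⟨by linarith, le_refl _⟩
      have : dist (⟨0, h0⟩ : (KIcc r hr : Set ℝ)) ⟨2*r, h2r⟩ = 2 * r := by
        rw [Subtype.dist_eq, Real.dist_eq, zero_sub, abs_neg, abs_of_nonneg (by positivity)]
      rw [← this]
      exact dist_le_diam_of_mem isCompact_univ.isBounded (mem_univ _) (mem_univ _)
  rw [hdiam]; ring

theorem dist_Kfam_delta1 {X : Type*} [MetricSpace X] [CompactSpace X] [Nonempty X] (p q : X)
    {r : ℝ} (hr : 0 < r) (hdiam : diam (univ : Set X) = 2 * r) (hpq : dist p q = 2 * r)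
    (t : unitInterval) : dist (Kfam X p r hr t).toGHSpace Delta1 = r := by
  haveI : CompactSpace (Kfam X p r hr t : Set ℝ) :=
    isCompact_iff_compactSpace.mp (Kfam X p r hr t).isCompact'
  haveI : Nonempty (Kfam X p r hr t : Set ℝ) := ⟨⟨0, Or.inl ⟨p, dist_self p⟩⟩⟩
  rw [NonemptyCompacts.toGHSpace, dist_toGHSpace_delta1, diam_Kfam p q hr hdiam hpq t]
  ring

theorem dist_sepQuot_delta1 {X : Type*} [MetricSpace X] [CompactSpace X] [Nonempty X] (p q : X)
    {r : ℝ} (hr : 0 < r) (hdiam : diam (univ : Set X) = 2 * r) (hpq : dist p q = 2 * r)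
    (t : unitInterval) :
    dist (toGHSpace (SeparationQuotient (Interp X p t))) Delta1 = r := by
  rw [dist_toGHSpace_delta1, diam_sepQuot_interp p q t hr hdiam hpq]
  ring

/-- For every `r > 0`, the sphere of radius `r` centered at the one-point
space is a path-connected subset of `GHSpace`. -/
theorem sphere_around_onePoint_isPathConnected (r : ℝ) (hr : 0 < r) :
    IsPathConnected {X : GHSpace | dist X Delta1 = r} := by
  refine ⟨(KIcc r hr).toGHSpace, dist_KIcc_delta1 r hr, ?_⟩
  intro Y hY
  set A := Y.Rep with hA
  have hYrep : toGHSpace A = Y := Y.toGHSpace_rep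
  have hdistY : dist (toGHSpace A) Delta1 = r := by rw [hYrep]; exact hY
  have hdiam : diam (univ : Set A) = 2 * r := by
    have := dist_toGHSpace_delta1 A
    rw [hdistY] at this
    linarith
  obtain ⟨p, q, hpq⟩ := exists_dist_eq_diam A
  rw [hdiam] at hpq
  -- Path 1 : from `Y` to the image space `Kfam A p r hr 0`.
  have hlip1 : ∀ s t : unitInterval,
      dist (toGHSpace (SeparationQuotient (Interp A p s)))
        (toGHSpace (SeparationQuotient (Interp A p t))) ≤ r * dist s t := by
    intro s t
    have hd : dist s t = |(s:ℝ) - (t:ℝ)| := by rw [Subtype.dist_eq, Real.dist_eq]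
    rcases le_total s t with h | h
    · refine le_trans (dist_gamma1_le p hr hdiam h) ?_
      rw [hd, abs_sub_comm, abs_of_nonneg (by exact sub_nonneg.2 h)]
    · rw [dist_comm]
      refine le_trans (dist_gamma1_le p hr hdiam h) ?_
      rw [hd, abs_of_nonneg (by exact sub_nonneg.2 h)]
  have hcont1 : Continuous fun t : unitInterval =>
      toGHSpace (SeparationQuotient (Interp A p t)) := by
    refine LipschitzWith.continuous (K := r.toNNReal) (LipschitzWith.of_dist_le_mul fun s t => ?_)
    rw [Real.coe_toNNReal r hr.le]
    exact hlip1 s t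
  have J1 : JoinedIn {X : GHSpace | dist X Delta1 = r} Y (Kfam A p r hr 0).toGHSpace := by
    refine ⟨⟨⟨fun t => toGHSpace (SeparationQuotient (Interp A p t)), hcont1⟩, ?_, ?_⟩, ?_⟩
    · show toGHSpace (SeparationQuotient (Interp A p 0)) = Y
      rw [gamma1_zero p, hYrep]
    · exact gamma1_one_eq_Kfam_zero p hr
    · intro t
      exact dist_sepQuot_delta1 p q hr hdiam hpq t
  -- Path 2 : from the image space to the interval `[0, 2r]`.
  have hlip2 : ∀ s t : unitInterval,
      dist (Kfam A p r hr s).toGHSpace (Kfam A p r hr t).toGHSpace ≤ (2 * r) * dist s t := by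
    intro s t
    have hd : dist s t = |(s:ℝ) - (t:ℝ)| := by rw [Subtype.dist_eq, Real.dist_eq]
    have key : ∀ s t : unitInterval, s ≤ t →
        dist (Kfam A p r hr s).toGHSpace (Kfam A p r hr t).toGHSpace ≤ 2 * r * ((t:ℝ) - s) :=
      fun s t h => le_trans (toGHSpace_lipschitz.dist_le_mul _ _)
        (by simpa using Kfam_dist_le p hr h)
    rcases le_total s t with h | h
    · refine le_trans (key s t h) ?_
      rw [hd, abs_sub_comm, abs_of_nonneg (by exact sub_nonneg.2 h)]
    · rw [dist_comm]
      refine le_trans (key t s h) ?_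
      rw [hd, abs_of_nonneg (by exact sub_nonneg.2 h)]
  have hcont2 : Continuous fun t : unitInterval => (Kfam A p r hr t).toGHSpace := by
    refine LipschitzWith.continuous (K := (2*r).toNNReal)
      (LipschitzWith.of_dist_le_mul fun s t => ?_)
    rw [Real.coe_toNNReal _ (by linarith : (0:ℝ) ≤ 2*r)]
    exact hlip2 s t
  have J2 : JoinedIn {X : GHSpace | dist X Delta1 = r} (Kfam A p r hr 0).toGHSpace
      (KIcc r hr).toGHSpace := by
    refine ⟨⟨⟨fun t => (Kfam A p r hr t).toGHSpace, hcont2⟩, rfl, ?_⟩, ?_⟩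
    · show (Kfam A p r hr 1).toGHSpace = (KIcc r hr).toGHSpace
      rw [Kfam_one p hr hdiam]
    · intro t
      exact dist_Kfam_delta1 p q hr hdiam hpq t
  exact (J1.trans J2).symm
end
end

section
/- Let T0 < T1 and S0 ≤ S1 be real numbers, and let F : [T0,T1] × [S0,S1] → ℝ be a continuous function such that (1) for each s ∈ [S0,S1] the function t ↦ F(t,s) is strictly monotone, and (2) there exists a real r with F(T0,s) ≤ r ≤ F(T1,s) for all s ∈ [S0,S1]. Then there exists a continuous function t : [S0,S1] → [T0,T1] such that the level set { (p,s) ∈ [T0,T1] × [S0,S1] : F(p,s) = r } equals { (t(s), s) : s ∈ [S0,S1] }; in particular this level set is the image of the embedded continuous curve s ↦ (t(s), s). -/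
/-!
For each `s` the slice `t ↦ F (t, s)` is injective, so the intermediate value theorem gives a
unique root `t s`, and the level set is the graph of `t`. This graph is closed, being a level set
of a continuous function on a closed set, and a function into a compact set with closed graph is
continuous.
-/

open Set Filter Topology

theorem IsCompact.continuousOn_of_isClosed_graph {X Y : Type*} [TopologicalSpace X]
    [TopologicalSpace Y] {f : X → Y} {s : Set X} {K : Set Y} (hK : IsCompact K)
    (hfK : MapsTo f s K) (hgraph : IsClosed ((fun x => (f x, x)) '' s)) : ContinuousOn f s := by
  intro x _
  refine hK.tendsto_nhds_of_unique_mapClusterPt (eventually_mem_nhdsWithin.mono hfK)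
    fun y _ hy => ?_
  -- along the points of `s` near `x` whose images are near `y`, the graph tends to `(y, x)`
  let l := comap f (𝓝 y) ⊓ 𝓝[s] x
  have : l.NeBot := neBot_inf_comap_iff_map'.2 hy
  have hlim : Tendsto (fun x' => (f x', x')) l (𝓝 (y, x)) :=
    (tendsto_comap.mono_left inf_le_left).prodMk_nhds
      (tendsto_nhdsWithin_iff.1 (tendsto_id.mono_left inf_le_right)).1
  have hmem : (y, x) ∈ (fun x => (f x, x)) '' s := by
    rw [← hgraph.closure_eq]
    exact mem_closure_of_tendsto hlim
      ((eventually_mem_nhdsWithin.filter_mono inf_le_right).mono fun _ hx' =>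
        mem_image_of_mem _ hx')
  obtain ⟨x', hx', hxy⟩ := hmem
  simp only [Prod.mk.injEq] at hxy
  obtain ⟨rfl, rfl⟩ := hxy
  rfl

theorem sep_prod_eq_graph {X Y : Type*} {s : Set X} {K : Set Y} {P : Y × X → Prop} {u : X → Y}
    (huK : MapsTo u s K) (hu : ∀ x ∈ s, ∀ y ∈ K, P (y, x) ↔ y = u x) :
    {p ∈ K ×ˢ s | P p} = (fun x => (u x, x)) '' s := by
  ext ⟨y, x⟩
  constructor
  · rintro ⟨⟨hy, hx⟩, hP⟩
    exact ⟨x, hx, by rw [(hu x hx y hy).1 hP]⟩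
  · rintro ⟨x, hx, hxy⟩
    simp only [Prod.mk.injEq] at hxy
    obtain ⟨rfl, rfl⟩ := hxy
    exact ⟨⟨huK hx, hx⟩, (hu x hx _ (huK hx)).2 rfl⟩

theorem levelSet_is_graph_of_continuous_function_general
    (T0 T1 S0 S1 : ℝ) (hT : T0 < T1)
    (F : ℝ × ℝ → ℝ)
    (hF : ContinuousOn F (Set.Icc T0 T1 ×ˢ Set.Icc S0 S1))
    (hmono : ∀ s ∈ Set.Icc S0 S1,
      StrictMonoOn (fun t => F (t, s)) (Set.Icc T0 T1) ∨
      StrictAntiOn (fun t => F (t, s)) (Set.Icc T0 T1))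
    (r : ℝ)
    (hr : ∀ s ∈ Set.Icc S0 S1, F (T0, s) ≤ r ∧ r ≤ F (T1, s)) :
    ∃ t : ℝ → ℝ, ContinuousOn t (Set.Icc S0 S1) ∧
      (∀ s ∈ Set.Icc S0 S1, t s ∈ Set.Icc T0 T1) ∧
      {p ∈ Set.Icc T0 T1 ×ˢ Set.Icc S0 S1 | F p = r} =
        (fun s => (t s, s)) '' Set.Icc S0 S1 := by
  have hroot : ∀ s ∈ Icc S0 S1, ∃ t ∈ Icc T0 T1, F (t, s) = r := fun s hs =>
    intermediate_value_Icc hT.le (hF.comp (by fun_prop) fun t ht => ⟨ht, hs⟩) (hr s hs)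
  choose! u hu_mem hu_eq using hroot
  have hu_unique : ∀ s ∈ Icc S0 S1, ∀ t ∈ Icc T0 T1, F (t, s) = r ↔ t = u s := by
    intro s hs t ht
    refine ⟨fun h => ?_, fun h => h ▸ hu_eq s hs⟩
    have hinj : InjOn (fun t => F (t, s)) (Icc T0 T1) :=
      (hmono s hs).elim StrictMonoOn.injOn StrictAntiOn.injOn
    exact hinj ht (hu_mem s hs) (h.trans (hu_eq s hs).symm)
  have hgraph := sep_prod_eq_graph (P := fun p => F p = r) hu_mem hu_unique
  refine ⟨u, isCompact_Icc.continuousOn_of_isClosed_graph hu_mem ?_, hu_mem, hgraph⟩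
  rw [← hgraph]
  exact hF.preimage_isClosed_of_isClosed (isClosed_Icc.prod isClosed_Icc) isClosed_singleton

/-- an implicit function theorem.  If `F` is continuous on
`[T0,T1] × [S0,S1]`, strictly monotone in the first variable for each fixed second
variable, and `F(T0,s) ≤ r ≤ F(T1,s)` for all `s`, then the level set `{F = r}` is the
image of an embedded continuous curve `s ↦ (t s, s)`. -/
theorem levelSet_is_graph_of_continuous_function
    (T0 T1 S0 S1 : ℝ) (hT : T0 < T1) (hS : S0 ≤ S1)
    (F : ℝ × ℝ → ℝ)
    (hF : ContinuousOn F (Set.Icc T0 T1 ×ˢ Set.Icc S0 S1))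
    (hmono : ∀ s ∈ Set.Icc S0 S1,
      StrictMonoOn (fun t => F (t, s)) (Set.Icc T0 T1) ∨
      StrictAntiOn (fun t => F (t, s)) (Set.Icc T0 T1))
    (r : ℝ)
    (hr : ∀ s ∈ Set.Icc S0 S1, F (T0, s) ≤ r ∧ r ≤ F (T1, s)) :
    ∃ t : ℝ → ℝ, ContinuousOn t (Set.Icc S0 S1) ∧
      (∀ s ∈ Set.Icc S0 S1, t s ∈ Set.Icc T0 T1) ∧
      {p ∈ Set.Icc T0 T1 ×ˢ Set.Icc S0 S1 | F p = r} =
        (fun s => (t s, s)) '' Set.Icc S0 S1 :=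
  levelSet_is_graph_of_continuous_function_general T0 T1 S0 S1 hT F hF hmono r hr
end

section
/- Let G and C be metric spaces with 0 < diam G < ∞, let λ ≥ 1 be real, and let R be a correspondence between G and C whose distortion satisfies dis R > diam G. Let R_λ denote R regarded as a correspondence between G and λ·C (the same subset of the product of underlying sets). Then dis R_λ ≥ dis R + ((λ − 1)/2)·diam G. -/
open Metric

open scoped ENNReal

/-- A correspondence between `X` and `Y`: a relation such that both projections are
surjective on it. -/
def IsCorrespondence {X Y : Type*} (R : Set (X × Y)) : Prop :=
  (∀ x : X, ∃ y : Y, (x, y) ∈ R) ∧ ∀ y : Y, ∃ x : X, (x, y) ∈ R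

/-- The distortion of a relation between two metric spaces, with values in `[0,∞]`. -/
noncomputable def relDis {X Y : Type*} [MetricSpace X] [MetricSpace Y]
    (σ : Set (X × Y)) : ℝ≥0∞ :=
  ⨆ (p ∈ σ) (q ∈ σ), ENNReal.ofReal |dist (Prod.fst p) (Prod.fst q) -
    dist (Prod.snd p) (Prod.snd q)|

/-- `s(M)`: the infimum of distances between distinct points of `M`. -/
noncomputable def sSpec (M : Type*) [MetricSpace M] : ℝ≥0∞ :=
  ⨅ (x : M) (y : M) (_ : x ≠ y), edist x y

/-- The distortion of a self-map of a metric space, with values in `[0,∞]`. -/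
noncomputable def mapDis {M : Type*} [MetricSpace M] (f : M → M) : ℝ≥0∞ :=
  ⨆ (x : M) (y : M), ENNReal.ofReal |dist x y - dist (f x) (f y)|

/-- `e(M)`: the infimum of distortions of non-identity bijections of `M`. -/
noncomputable def eSpec (M : Type*) [MetricSpace M] : ℝ≥0∞ :=
  ⨅ (f : M ≃ M) (_ : f ≠ Equiv.refl M), mapDis (f : M → M)

/-- `t(M)`: the infimum of the triangle inequality defects over triples of pairwise
distinct points of `M`. -/
noncomputable def tSpec (M : Type*) [MetricSpace M] : ℝ≥0∞ :=
  ⨅ (x : M) (y : M) (z : M) (_ : x ≠ y) (_ : y ≠ z) (_ : x ≠ z),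
    ENNReal.ofReal (dist x y + dist y z - dist x z)

/-!
Write `a = d(g, g')` and `b = d(c, c')` for two pairs of `R`. Scaling `C` by `λ` turns the
defect `|a - b|` into `|a - λ b|`, which is at least `|a - b| + (λ - 1) b` when `a ≤ b`.
Since `a ≤ diam G`, a pair whose defect exceeds `diam G` has `b ≥ a + diam G ≥ diam G / 2`,
so `dis R_λ ≥ diam G + (λ - 1)/2 · diam G`. Every pair of `R` either has defect at most
`diam G`, and is then dominated by this bound, or has `a ≤ b` and `b ≥ diam G / 2`, and then
its defect grows by at least `(λ - 1)/2 · diam G` under scaling.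
-/

lemma abs_sub_le_or_le_and_half_le {a b D : ℝ} (ha : 0 ≤ a) (haD : a ≤ D) (hb : 0 ≤ b) :
    |a - b| ≤ D ∨ (a ≤ b ∧ D / 2 ≤ b) := by
  rcases le_total a b with hab | hba
  · by_cases hbD : D / 2 ≤ b
    · exact .inr ⟨hab, hbD⟩
    · exact .inl (by rw [abs_sub_comm, abs_of_nonneg (sub_nonneg.2 hab)]; linarith)
  · exact .inl (by rw [abs_of_nonneg (sub_nonneg.2 hba)]; linarith)

lemma abs_sub_add_le_abs_sub_mul {a b t lam : ℝ} (hab : a ≤ b) (htb : t ≤ b)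
    (hlam : 1 ≤ lam) :
    |a - b| + (lam - 1) * t ≤ |a - lam * b| := by
  rw [abs_sub_comm a b, abs_of_nonneg (sub_nonneg.2 hab), abs_sub_comm]
  calc b - a + (lam - 1) * t ≤ b - a + (lam - 1) * b := by gcongr
    _ = lam * b - a := by ring
    _ ≤ |lam * b - a| := le_abs_self _

section relDis

variable {X Y : Type*} [MetricSpace X] [MetricSpace Y] {σ : Set (X × Y)}

lemma ofReal_abs_dist_sub_dist_le_relDis {p q : X × Y} (hp : p ∈ σ) (hq : q ∈ σ) :
    ENNReal.ofReal |dist p.1 q.1 - dist p.2 q.2| ≤ relDis σ :=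
  le_iSup₂_of_le p hp (le_iSup₂_of_le q hq le_rfl)

lemma exists_lt_abs_dist_sub_dist_of_ofReal_lt_relDis {r : ℝ}
    (h : ENNReal.ofReal r < relDis σ) :
    ∃ p ∈ σ, ∃ q ∈ σ, r < |dist p.1 q.1 - dist p.2 q.2| := by
  simp only [relDis, lt_iSup_iff, ENNReal.ofReal_lt_ofReal_iff'] at h
  obtain ⟨p, hp, q, hq, hr, -⟩ := h
  exact ⟨p, hp, q, hq, hr⟩

lemma relDis_add_le {c S : ℝ≥0∞} (hc : c ≠ ⊤) (hcS : c ≤ S)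
    (h : ∀ p ∈ σ, ∀ q ∈ σ, ENNReal.ofReal |dist p.1 q.1 - dist p.2 q.2| + c ≤ S) :
    relDis σ + c ≤ S := by
  have : relDis σ ≤ S - c :=
    iSup₂_le fun p hp => iSup₂_le fun q hq => ENNReal.le_sub_of_add_le_right hc (h p hp q hq)
  calc relDis σ + c ≤ S - c + c := by gcongr
    _ = S := tsub_add_cancel_of_le hcS

lemma ofReal_add_le_relDis_scaled {lam t : ℝ} [Fact (0 < lam)] (hlam : 1 ≤ lam) (ht : 0 ≤ t)
    {p q : X × Y} (hp : p ∈ σ) (hq : q ∈ σ) (hab : dist p.1 q.1 ≤ dist p.2 q.2)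
    (htb : t ≤ dist p.2 q.2) :
    ENNReal.ofReal |dist p.1 q.1 - dist p.2 q.2| + ENNReal.ofReal ((lam - 1) * t) ≤
      relDis (X := X) (Y := Scaled lam Y) σ := by
  rw [← ENNReal.ofReal_add (abs_nonneg _) (mul_nonneg (sub_nonneg.2 hlam) ht)]
  calc _ ≤ ENNReal.ofReal |dist p.1 q.1 - lam * dist p.2 q.2| :=
        ENNReal.ofReal_le_ofReal (abs_sub_add_le_abs_sub_mul hab htb hlam)
    _ ≤ _ := ofReal_abs_dist_sub_dist_le_relDis (Y := Scaled lam Y) hp hq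

end relDis

theorem relDis_scaled_ge_general {G C : Type} [MetricSpace G] [MetricSpace C]
    (hfin : EMetric.diam (Set.univ : Set G) ≠ ⊤)
    (lam : ℝ) [Fact (0 < lam)] (hlam : 1 ≤ lam)
    (R : Set (G × C))
    (hdis : ENNReal.ofReal (Metric.diam (Set.univ : Set G)) < relDis R) :
    relDis R + ENNReal.ofReal ((lam - 1) / 2 * Metric.diam (Set.univ : Set G)) ≤
      relDis (X := G) (Y := Scaled lam C) R := by
  set D := diam (Set.univ : Set G)
  have hD₂ : 0 ≤ D / 2 := by positivity
  have hdist (x y : G) : dist x y ≤ D :=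
    dist_le_diam_of_mem (isBounded_iff_ediam_ne_top.2 hfin) trivial trivial
  rw [show (lam - 1) / 2 * D = (lam - 1) * (D / 2) by ring]
  have hsplit (p q : G × C) : |dist p.1 q.1 - dist p.2 q.2| ≤ D ∨
      (dist p.1 q.1 ≤ dist p.2 q.2 ∧ D / 2 ≤ dist p.2 q.2) :=
    abs_sub_le_or_le_and_half_le dist_nonneg (hdist _ _) dist_nonneg
  obtain ⟨p₀, hp₀, q₀, hq₀, hbig⟩ :=
    exists_lt_abs_dist_sub_dist_of_ofReal_lt_relDis hdis
  have hDS : ENNReal.ofReal D + ENNReal.ofReal ((lam - 1) * (D / 2)) ≤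
      relDis (X := G) (Y := Scaled lam C) R := by
    rcases hsplit p₀ q₀ with hsmall | ⟨hab, hb⟩
    · exact absurd hbig hsmall.not_gt
    · exact (add_le_add_left (ENNReal.ofReal_le_ofReal hbig.le) _).trans
        (ofReal_add_le_relDis_scaled hlam hD₂ hp₀ hq₀ hab hb)
  refine relDis_add_le ENNReal.ofReal_ne_top (le_add_self.trans hDS) fun p hp q hq => ?_
  rcases hsplit p q with hsmall | ⟨hab, hb⟩
  · exact (add_le_add_left (ENNReal.ofReal_le_ofReal hsmall) _).trans hDS
  · exact ofReal_add_le_relDis_scaled hlam hD₂ hp hq hab hb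

/-- Let `G`, `C` be metric spaces, `0 < diam G < ∞`, `λ ≥ 1`, and let `R`
be a correspondence between `G` and `C` with `dis R > diam G`.  Regarding `R` as a
correspondence `R_λ` between `G` and `λ·C`, one has
`dis R_λ ≥ dis R + ((λ−1)/2)·diam G`. -/
theorem relDis_scaled_ge {G C : Type} [MetricSpace G] [MetricSpace C]
    (hpos : 0 < Metric.diam (Set.univ : Set G))
    (hfin : EMetric.diam (Set.univ : Set G) ≠ ⊤)
    (lam : ℝ) [Fact (0 < lam)] (hlam : 1 ≤ lam)
    (R : Set (G × C)) (hR : IsCorrespondence R)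
    (hdis : ENNReal.ofReal (Metric.diam (Set.univ : Set G)) < relDis R) :
    relDis R + ENNReal.ofReal ((lam - 1) / 2 * Metric.diam (Set.univ : Set G)) ≤
      relDis (X := G) (Y := Scaled lam C) R :=
  relDis_scaled_ge_general hfin lam hlam R hdis
end

section
/- Let G and C be nonempty compact metric spaces with 2·d_GH(G,C) > diam G > 0, and let λ ≥ 1 be real. Then d_GH(G, λ·C) ≥ d_GH(G,C) + ((λ − 1)/4)·diam G. -/
open Metric

/-- Auxiliary lemma: a "correspondence" (surjective maps from a common index type with
distortion at most `2ε`) bounds the Gromov-Hausdorff distance by `ε`. -/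
theorem ghDist_le_of_surj {X : Type*} {Y : Type*} [MetricSpace X] [CompactSpace X] [Nonempty X]
    [MetricSpace Y] [CompactSpace Y] [Nonempty Y] {Z : Type*} [Nonempty Z]
    (Phi : Z → X) (Psi : Z → Y) (hPhi : Function.Surjective Phi)
    (hPsi : Function.Surjective Psi) {ε : ℝ} (hε : 0 < ε)
    (H : ∀ p q, |dist (Phi p) (Phi q) - dist (Psi p) (Psi q)| ≤ 2 * ε) :
    GromovHausdorff.ghDist X Y ≤ ε := by
  letI : MetricSpace (X ⊕ Y) := Metric.glueMetricApprox Phi Psi ε hε H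
  have Il : Isometry (Sum.inl : X → X ⊕ Y) := Isometry.of_dist_eq fun x y => rfl
  have Ir : Isometry (Sum.inr : Y → X ⊕ Y) := Isometry.of_dist_eq fun x y => rfl
  refine le_trans (GromovHausdorff.ghDist_le_hausdorffDist Il Ir) ?_
  refine Metric.hausdorffDist_le_of_mem_dist hε.le ?_ ?_
  · rintro _ ⟨x, rfl⟩
    obtain ⟨p, rfl⟩ := hPhi x
    exact ⟨Sum.inr (Psi p), Set.mem_range_self _,
      le_of_eq (Metric.glueDist_glued_points Phi Psi ε p)⟩
  · rintro _ ⟨y, rfl⟩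
    obtain ⟨p, rfl⟩ := hPsi y
    refine ⟨Sum.inl (Phi p), Set.mem_range_self _, ?_⟩
    rw [dist_comm]
    exact le_of_eq (Metric.glueDist_glued_points Phi Psi ε p)

/-- The key quantitative step: `λ · d_GH(G,C) ≤ d_GH(G, λ·C)` when `diam G < 2 d_GH(G,C)`. -/
theorem lam_mul_ghDist_le {G : Type} {C : Type}
    [MetricSpace G] [CompactSpace G] [Nonempty G]
    [MetricSpace C] [CompactSpace C] [Nonempty C]
    (hpos : 0 < Metric.diam (Set.univ : Set G))
    (hlt : Metric.diam (Set.univ : Set G) < 2 * GromovHausdorff.ghDist G C)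
    (lam : ℝ) [Fact (0 < lam)] (hlam : 1 ≤ lam) :
    lam * GromovHausdorff.ghDist G C ≤ GromovHausdorff.ghDist G (Scaled lam C) := by
  have hl : (0 : ℝ) < lam := Fact.out
  set g : ℝ := Metric.diam (Set.univ : Set G) with hgdef
  set d : ℝ := GromovHausdorff.ghDist G C with hddef
  set D : ℝ := GromovHausdorff.ghDist G (Scaled lam C) with hDdef
  refine le_of_forall_pos_le_add fun δ hδ => ?_
  set η : ℝ := min (δ / lam) ((2 * d - g) / 2) with hηdef
  have hη0 : 0 < η := lt_min (by positivity) (by linarith)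
  have hηd : η ≤ (2 * d - g) / 2 := min_le_right _ _
  have hηδ : lam * η ≤ δ := by
    have h1 : η ≤ δ / lam := min_le_left _ _
    calc lam * η ≤ lam * (δ / lam) := by nlinarith
      _ = δ := by field_simp
  set injl := GromovHausdorff.optimalGHInjl G (Scaled lam C) with hinjl
  set injr := GromovHausdorff.optimalGHInjr G (Scaled lam C) with hinjr
  have Il : Isometry injl := GromovHausdorff.isometry_optimalGHInjl G (Scaled lam C)
  have Ir : Isometry injr := GromovHausdorff.isometry_optimalGHInjr G (Scaled lam C)
  have fin : EMetric.hausdorffEdist (Set.range injl) (Set.range injr) ≠ ⊤ :=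
    Metric.hausdorffEdist_ne_top_of_nonempty_of_bounded (Set.range_nonempty _)
      (Set.range_nonempty _) (isCompact_range Il.continuous).isBounded
      (isCompact_range Ir.continuous).isBounded
  have hDlt : Metric.hausdorffDist (Set.range injl) (Set.range injr) < D + δ / 2 := by
    rw [GromovHausdorff.hausdorffDist_optimal, ← hDdef]
    linarith
  set W := {p : G × Scaled lam C // dist (injl p.1) (injr p.2) < D + δ / 2} with hWdef
  set Phi : W → G := fun w => w.1.1 with hPhidef
  set Psi : W → C := fun w => Scaled.unscale w.1.2 with hPsidef
  have hPhi : Function.Surjective Phi := by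
    intro x
    obtain ⟨y, hy, hxy⟩ :=
      Metric.exists_dist_lt_of_hausdorffDist_lt (Set.mem_range_self x) hDlt fin
    obtain ⟨c, rfl⟩ := hy
    exact ⟨⟨(x, c), hxy⟩, rfl⟩
  have hPsi : Function.Surjective Psi := by
    intro c
    obtain ⟨y, hy, hxy⟩ :=
      Metric.exists_dist_lt_of_hausdorffDist_lt'
        (Set.mem_range_self (Scaled.mk lam c)) hDlt fin
    obtain ⟨x, rfl⟩ := hy
    exact ⟨⟨(x, Scaled.mk lam c), hxy⟩, rfl⟩
  haveI : Nonempty W := ⟨(hPhi (Classical.arbitrary G)).choose⟩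
  by_cases hcase : ∀ p q : W, |dist (Phi p) (Phi q) - dist (Psi p) (Psi q)| ≤ 2 * (d - η / 2)
  · exfalso
    have hε : 0 < d - η / 2 := by linarith
    have hle := ghDist_le_of_surj Phi Psi hPhi hPsi hε hcase
    rw [← hddef] at hle
    linarith
  · push_neg at hcase
    obtain ⟨p, q, hpq⟩ := hcase
    have ha : dist (Phi p) (Phi q) ≤ g := by
      rw [hgdef]
      exact Metric.dist_le_diam_of_mem isCompact_univ.isBounded (Set.mem_univ _) (Set.mem_univ _)
    have hb0 : (0 : ℝ) ≤ dist (Psi p) (Psi q) := dist_nonneg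
    have ha0 : (0 : ℝ) ≤ dist (Phi p) (Phi q) := dist_nonneg
    -- from the absolute value, the C-distance must exceed the G-distance by at least 2d - η
    have hba : dist (Psi p) (Psi q) - dist (Phi p) (Phi q) > 2 * d - η := by
      rcases abs_cases (dist (Phi p) (Phi q) - dist (Psi p) (Psi q)) with ⟨h1, h2⟩ | ⟨h1, h2⟩ <;>
        linarith
    -- cross estimate in the optimal coupling
    have cross := dist_dist_dist_le (injl (Phi p)) (injl (Phi q)) (injr p.1.2) (injr q.1.2)
    rw [Real.dist_eq, Il.dist_eq, Ir.dist_eq] at cross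
    have hscale : dist (p.1 : G × Scaled lam C).2 (q.1 : G × Scaled lam C).2 =
        lam * dist (Psi p) (Psi q) := Scaled.dist_eq _ _
    rw [hscale] at cross
    have hp2 : dist (injl (Phi p)) (injr p.1.2) < D + δ / 2 := p.2
    have hq2 : dist (injl (Phi q)) (injr q.1.2) < D + δ / 2 := q.2
    have key : lam * dist (Psi p) (Psi q) - dist (Phi p) (Phi q) < 2 * D + δ := by
      have habs : |dist (Phi p) (Phi q) - lam * dist (Psi p) (Psi q)| < 2 * (D + δ / 2) := by
        calc |dist (Phi p) (Phi q) - lam * dist (Psi p) (Psi q)|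
            ≤ dist (injl (Phi p)) (injr p.1.2) + dist (injl (Phi q)) (injr q.1.2) := cross
          _ < 2 * (D + δ / 2) := by linarith
      have := (abs_lt.mp habs).1
      linarith
    -- combine: lam * b - a ≥ (b - a) + (lam - 1) * b ≥ lam * (2d - η)
    have hbig : lam * (2 * d - η) ≤ lam * dist (Psi p) (Psi q) - dist (Phi p) (Phi q) := by
      have hbge : 2 * d - η ≤ dist (Psi p) (Psi q) := by linarith
      nlinarith [mul_le_mul_of_nonneg_left hbge (by linarith : (0:ℝ) ≤ lam - 1)]
    nlinarith

/-- If `G`, `C` are nonempty compact metric spaces with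
`2·d_GH(G,C) > diam G > 0` and `λ ≥ 1`, then
`d_GH(G, λ·C) ≥ d_GH(G,C) + ((λ−1)/4)·diam G`. -/
theorem ghDist_scaled_ge {G : Type} {C : Type}
    [MetricSpace G] [CompactSpace G] [Nonempty G]
    [MetricSpace C] [CompactSpace C] [Nonempty C]
    (hpos : 0 < Metric.diam (Set.univ : Set G))
    (hlt : Metric.diam (Set.univ : Set G) < 2 * GromovHausdorff.ghDist G C)
    (lam : ℝ) [Fact (0 < lam)] (hlam : 1 ≤ lam) :
    GromovHausdorff.ghDist G C + (lam - 1) / 4 * Metric.diam (Set.univ : Set G) ≤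
      GromovHausdorff.ghDist G (Scaled lam C) := by
  have key := lam_mul_ghDist_le hpos hlt lam hlam
  nlinarith [mul_nonneg (by linarith : (0:ℝ) ≤ lam - 1)
      (by linarith : (0:ℝ) ≤ 2 * GromovHausdorff.ghDist G C - Metric.diam (Set.univ : Set G)),
    mul_nonneg (by linarith : (0:ℝ) ≤ lam - 1) (le_of_lt hpos)]
end

section
/- Let G and C be nonempty compact metric spaces with 2·d_GH(G,C) > diam G > 0. Then the function h(λ) = d_GH(G, λ·C) is strictly increasing on [1,∞): for all 1 ≤ λ1 < λ2 one has d_GH(G, λ1·C) < d_GH(G, λ2·C). -/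
open Metric

open GromovHausdorff Metric Set in
/-- If there is a "correspondence" `R` between `X` and `Y` with distortion at most `δ`,
then `ghDist X Y ≤ δ/2`. -/
lemma ghDist_le_of_rel {X : Type} {Y : Type} [MetricSpace X] [CompactSpace X] [Nonempty X]
    [MetricSpace Y] [CompactSpace Y] [Nonempty Y]
    (R : X → Y → Prop) (δ : ℝ) (hδ : 0 < δ)
    (htot : ∀ x, ∃ y, R x y) (hcot : ∀ y, ∃ x, R x y)
    (hdis : ∀ x y x' y', R x y → R x' y' → |dist x x' - dist y y'| ≤ δ) :
    ghDist X Y ≤ δ / 2 := by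
  obtain ⟨x0⟩ := ‹Nonempty X›
  obtain ⟨y0, hy0⟩ := htot x0
  set Z := {p : X × Y // R p.1 p.2} with hZ
  haveI : Nonempty Z := ⟨⟨(x0, y0), hy0⟩⟩
  have H : ∀ p q : Z, |dist p.1.1 q.1.1 - dist p.1.2 q.1.2| ≤ 2 * (δ / 2) := by
    intro p q
    rw [show 2 * (δ / 2) = δ by ring]
    exact hdis _ _ _ _ p.2 q.2
  letI : MetricSpace (X ⊕ Y) :=
    glueMetricApprox (fun z : Z => z.1.1) (fun z : Z => z.1.2) (δ / 2) (by linarith) H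
  let Fl := @Sum.inl X Y
  let Fr := @Sum.inr X Y
  have Il : Isometry Fl := Isometry.of_dist_eq fun x y => rfl
  have Ir : Isometry Fr := Isometry.of_dist_eq fun x y => rfl
  have h1 : ghDist X Y ≤ hausdorffDist (range Fl) (range Fr) := ghDist_le_hausdorffDist Il Ir
  refine h1.trans (hausdorffDist_le_of_mem_dist (by linarith) ?_ ?_)
  · rintro _ ⟨x, rfl⟩
    obtain ⟨y, hy⟩ := htot x
    exact ⟨Fr y, mem_range_self _,
      le_of_eq (glueDist_glued_points (fun z : Z => z.1.1) (fun z : Z => z.1.2) (δ / 2)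
        ⟨(x, y), hy⟩)⟩
  · rintro _ ⟨y, rfl⟩
    obtain ⟨x, hx⟩ := hcot y
    refine ⟨Fl x, mem_range_self _, ?_⟩
    rw [dist_comm]
    exact le_of_eq (glueDist_glued_points (fun z : Z => z.1.1) (fun z : Z => z.1.2) (δ / 2)
      ⟨(x, y), hx⟩)

open GromovHausdorff Metric Set in
lemma key_scaled {G C : Type} [MetricSpace G] [CompactSpace G] [Nonempty G]
    [MetricSpace C] [CompactSpace C] [Nonempty C]
    (hpos : 0 < Metric.diam (Set.univ : Set G))
    (μ ν : ℝ) [Fact (0 < μ)] [Fact (0 < ν)] (hμν : μ < ν) :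
    ν * (2 * ghDist G (Scaled μ C)) ≤
      μ * (2 * ghDist G (Scaled ν C)) + (ν - μ) * Metric.diam (Set.univ : Set G) := by
  have hμ : (0:ℝ) < μ := Fact.out
  have hν : (0:ℝ) < ν := Fact.out
  set dG := Metric.diam (Set.univ : Set G) with hdG
  set D := ghDist G (Scaled ν C) with hD
  have hD0 : 0 ≤ D := by
    rw [hD, ← hausdorffDist_optimal]; exact hausdorffDist_nonneg
  set E := μ * (2 * D) + (ν - μ) * dG with hE
  have hE0 : 0 < E := by
    have : 0 < (ν - μ) * dG := mul_pos (by linarith) hpos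
    nlinarith
  set f := optimalGHInjl G (Scaled ν C) with hf
  set g := optimalGHInjr G (Scaled ν C) with hg
  have If : Isometry f := isometry_optimalGHInjl G (Scaled ν C)
  have Ig : Isometry g := isometry_optimalGHInjr G (Scaled ν C)
  have hopt : hausdorffDist (range f) (range g) = D := hausdorffDist_optimal
  have hfin : EMetric.hausdorffEdist (range f) (range g) ≠ ⊤ :=
    hausdorffEdist_ne_top_of_nonempty_of_bounded (range_nonempty f) (range_nonempty g)
      (isCompact_range If.continuous).isBounded (isCompact_range Ig.continuous).isBounded
  set R : G → Scaled μ C → Prop :=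
    fun x c => dist (f x) (g (Scaled.mk ν (Scaled.unscale c))) ≤ D with hR
  have htot : ∀ x, ∃ c, R x c := by
    intro x
    have h1 : infDist (f x) (range g) ≤ D := by
      rw [← hopt]
      exact infDist_le_hausdorffDist_of_mem (mem_range_self x) hfin
    obtain ⟨_, ⟨c', rfl⟩, hcd⟩ :=
      (isCompact_range Ig.continuous).exists_infDist_eq_dist (range_nonempty g) (f x)
    exact ⟨Scaled.mk μ (Scaled.unscale c'), by rw [hR]; rw [hcd] at h1; exact h1⟩
  have hcot : ∀ c, ∃ x, R x c := by
    intro c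
    have h1 : infDist (g (Scaled.mk ν (Scaled.unscale c))) (range f) ≤ D := by
      rw [← hopt, hausdorffDist_comm]
      exact infDist_le_hausdorffDist_of_mem (mem_range_self _)
        (by rwa [EMetric.hausdorffEdist_comm])
    obtain ⟨_, ⟨x, rfl⟩, hcd⟩ :=
      (isCompact_range If.continuous).exists_infDist_eq_dist (range_nonempty f)
        (g (Scaled.mk ν (Scaled.unscale c)))
    refine ⟨x, ?_⟩
    show dist (f x) (g (Scaled.mk ν (Scaled.unscale c))) ≤ D
    rw [dist_comm]
    rw [hcd] at h1
    exact h1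
  have hdis : ∀ x c x' c', R x c → R x' c' → |dist x x' - dist c c'| ≤ E / ν := by
    intro x c x' c' h h'
    set y := Scaled.mk ν (Scaled.unscale c) with hy
    set y' := Scaled.mk ν (Scaled.unscale c') with hy'
    set a := dist x x' with ha
    set b := dist (Scaled.unscale c) (Scaled.unscale c') with hb
    have hb0 : 0 ≤ b := dist_nonneg
    have ha0 : 0 ≤ a := dist_nonneg
    have haG : a ≤ dG := dist_le_diam_of_mem isCompact_univ.isBounded trivial trivial
    have hcc' : dist c c' = μ * b := Scaled.dist_eq c c'
    have hyy' : dist (g y) (g y') = ν * b := Ig.dist_eq y y'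
    have hxx' : dist (f x) (f x') = a := If.dist_eq x x'
    have t1 : a ≤ 2 * D + ν * b := by
      have := dist_triangle4 (f x) (g y) (g y') (f x')
      rw [hxx', hyy'] at this
      have h2 := h'
      rw [hR, dist_comm] at h2
      linarith [this, h, h2]
    have t2 : ν * b ≤ 2 * D + a := by
      have := dist_triangle4 (g y) (f x) (f x') (g y')
      rw [hxx', hyy'] at this
      have h1 := h
      rw [hR, dist_comm] at h1
      linarith [this, h1, h']
    have key1 : (a - μ * b) * ν ≤ E := by nlinarith
    have key2 : (μ * b - a) * ν ≤ E := by nlinarith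
    have hq1 : a - μ * b ≤ E / ν := (le_div_iff₀ hν).2 key1
    have hq2 : μ * b - a ≤ E / ν := (le_div_iff₀ hν).2 key2
    rw [hcc', abs_le]
    exact ⟨by linarith, hq1⟩
  have hmain : ghDist G (Scaled μ C) ≤ (E / ν) / 2 :=
    ghDist_le_of_rel R (E / ν) (div_pos hE0 hν) htot hcot hdis
  have h2 : 2 * ghDist G (Scaled μ C) ≤ E / ν := by linarith
  calc ν * (2 * ghDist G (Scaled μ C)) ≤ ν * (E / ν) :=
        mul_le_mul_of_nonneg_left h2 hν.le
    _ = E := by field_simp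

/-- If `G`, `C` are nonempty compact metric spaces with
`2·d_GH(G,C) > diam G > 0`, then `λ ↦ d_GH(G, λ·C)` is strictly increasing on `[1,∞)`. -/
theorem ghDist_scaled_strictMono {G : Type} {C : Type}
    [MetricSpace G] [CompactSpace G] [Nonempty G]
    [MetricSpace C] [CompactSpace C] [Nonempty C]
    (hpos : 0 < Metric.diam (Set.univ : Set G))
    (hlt : Metric.diam (Set.univ : Set G) < 2 * GromovHausdorff.ghDist G C) :
    ∀ (l1 l2 : ℝ) [Fact (0 < l1)] [Fact (0 < l2)], 1 ≤ l1 → l1 < l2 →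
      GromovHausdorff.ghDist G (Scaled l1 C) < GromovHausdorff.ghDist G (Scaled l2 C) := by
  intro l1 l2 _ _ hl1 hl12
  haveI : Fact ((0:ℝ) < 1) := ⟨one_pos⟩
  have hgh1 : GromovHausdorff.ghDist G (Scaled 1 C) = GromovHausdorff.ghDist G C := by
    have e : C ≃ᵢ Scaled (1:ℝ) C :=
      { toEquiv := (Equiv.refl C : C ≃ Scaled (1:ℝ) C)
        isometry_toFun := Isometry.of_dist_eq fun x y => by
          rw [Scaled.dist_eq, one_mul]; rfl }
    have h : GromovHausdorff.toGHSpace C = GromovHausdorff.toGHSpace (Scaled (1:ℝ) C) :=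
      GromovHausdorff.toGHSpace_eq_toGHSpace_iff_isometryEquiv.2 ⟨e⟩
    rw [GromovHausdorff.ghDist, GromovHausdorff.ghDist, h]
  have hl2 : (1:ℝ) < l2 := lt_of_le_of_lt hl1 hl12
  have h1 := key_scaled (C := C) hpos (1:ℝ) l2 hl2
  rw [hgh1] at h1
  have h2 := key_scaled (C := C) hpos l1 l2 hl12
  have step1 : Metric.diam (Set.univ : Set G) < 2 * GromovHausdorff.ghDist G (Scaled l2 C) := by
    nlinarith [h1, hlt, mul_pos (show (0:ℝ) < l2 by linarith)
      (show (0:ℝ) < 2 * GromovHausdorff.ghDist G C - Metric.diam (Set.univ : Set G) by linarith)]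
  nlinarith [h2, step1, hl12, mul_pos (sub_pos.2 hl12)
    (show (0:ℝ) < 2 * GromovHausdorff.ghDist G (Scaled l2 C) - Metric.diam (Set.univ : Set G)
      by linarith)]
end

section
/- Let M and X be metric spaces with M having at least 3 points, and let R be a correspondence between M and X whose distortion satisfies dis R < s(M). Then the family { R(i) : i ∈ M } is a partition of X; that is, for every x ∈ X there exists exactly one i ∈ M with (i, x) ∈ R. -/
open scoped ENNReal

/-- If `M` has at least 3 points and `R` is a correspondence between `M`
and `X` with `dis R < s(M)`, then the images `R(i)` form a partition of `X`: every `x ∈ X`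
belongs to exactly one `R(i)`. -/
theorem partition_of_correspondence {M X : Type*} [MetricSpace M] [MetricSpace X]
    (h3 : 3 ≤ Cardinal.mk M)
    (R : Set (M × X)) (hR : IsCorrespondence R)
    (hdis : relDis R < sSpec M) :
    ∀ x : X, ∃! i : M, (i, x) ∈ R := by
  intro x
  obtain ⟨i, hi⟩ := hR.2 x
  refine ⟨i, hi, fun j hj => ?_⟩
  by_contra hne
  have h1 : ENNReal.ofReal (dist j i) ≤ relDis R := by
    have := le_iSup₂ (f := fun (p : M × X) (_ : p ∈ R) =>
        ⨆ (q ∈ R), ENNReal.ofReal |dist p.1 q.1 - dist p.2 q.2|) (j, x) hj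
    refine le_trans ?_ this
    have := le_iSup₂ (f := fun (q : M × X) (_ : q ∈ R) =>
        ENNReal.ofReal |dist (j : M) q.1 - dist (x : X) q.2|) (i, x) hi
    simpa using this
  have h2 : sSpec M ≤ edist j i := by
    refine le_trans (iInf_le _ j) (le_trans (iInf_le _ i) (iInf_le _ hne))
  rw [edist_dist] at h2
  exact absurd (lt_of_le_of_lt (h2.trans h1) hdis) (lt_irrefl _)
end

section
/- Let M and X be metric spaces with M having at least 3 points, and let R and R' be correspondences between M and X with dis R < s(M)/2 and dis R' < s(M)/2. Then R and R' induce the same partition of X: the families of sets { R(i) : i ∈ M } and { R'(i) : i ∈ M } are equal. -/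
open scoped ENNReal

lemma relDis_le' {X Y : Type*} [MetricSpace X] [MetricSpace Y] {σ : Set (X × Y)}
    {p q : X × Y} (hp : p ∈ σ) (hq : q ∈ σ) :
    ENNReal.ofReal |dist p.1 q.1 - dist p.2 q.2| ≤
      (⨆ (p ∈ σ) (q ∈ σ), ENNReal.ofReal |dist (Prod.fst p) (Prod.fst q) -
        dist (Prod.snd p) (Prod.snd q)|) :=
  le_iSup₂_of_le p hp (le_iSup₂_of_le q hq le_rfl)

lemma sSpec_le' {M : Type*} [MetricSpace M] {i j : M} (h : i ≠ j) :
    (⨅ (x : M) (y : M) (_ : x ≠ y), edist x y) ≤ edist i j :=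
  iInf_le_of_le i (iInf_le_of_le j (iInf_le _ h))

lemma key_lemma {M X : Type*} [MetricSpace M] [MetricSpace X]
    (hstop : (⨅ (x : M) (y : M) (_ : x ≠ y), edist x y) ≠ ⊤)
    {σ : Set (M × X)}
    (hd : (⨆ (p ∈ σ) (q ∈ σ), ENNReal.ofReal |dist (Prod.fst p) (Prod.fst q) -
        dist (Prod.snd p) (Prod.snd q)|) < (⨅ (x : M) (y : M) (_ : x ≠ y), edist x y) / 2)
    {i j : M} {x y : X} (hx : (i, x) ∈ σ) (hy : (j, y) ∈ σ) :
    i = j ↔ edist x y < (⨅ (x : M) (y : M) (_ : x ≠ y), edist x y) / 2 := by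
  set sM := (⨅ (x : M) (y : M) (_ : x ≠ y), edist x y) with hsM
  have h2top : sM / 2 ≠ ⊤ := by
    simp [ENNReal.div_eq_top, hstop]
  have hle := relDis_le' (σ := σ) hx hy
  constructor
  · rintro rfl
    simp only [dist_self] at hle
    calc edist x y = ENNReal.ofReal |(0 : ℝ) - dist x y| := by
          rw [edist_dist]; congr 1; rw [abs_sub_comm]; simp [abs_of_nonneg dist_nonneg]
      _ ≤ _ := hle
      _ < sM / 2 := hd
  · intro hxy
    by_contra hij
    have hs_le : sM ≤ edist i j := sSpec_le' hij
    set a := dist i j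
    set b := dist x y
    have ha : (sM).toReal ≤ a := by
      have := hs_le.trans_eq (edist_dist i j)
      exact (ENNReal.toReal_le_toReal hstop (by simp)).mpr this |>.trans
        (le_of_eq (ENNReal.toReal_ofReal dist_nonneg))
    have hab : |a - b| < sM.toReal / 2 := by
      have h1 : ENNReal.ofReal |a - b| < sM / 2 := lt_of_le_of_lt hle hd
      have := (ENNReal.toReal_lt_toReal (by simp) h2top).mpr h1
      rwa [ENNReal.toReal_ofReal (abs_nonneg _), ENNReal.toReal_div,
        ENNReal.toReal_ofNat] at this
    have hb : b < sM.toReal / 2 := by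
      have := (ENNReal.toReal_lt_toReal (edist_ne_top x y) h2top).mpr hxy
      rwa [ENNReal.toReal_div, ENNReal.toReal_ofNat, ← dist_edist] at this
    have := abs_lt.mp hab
    linarith [this.1, this.2]

/-- If `M` has at least 3 points and `R`, `R'` are correspondences
between `M` and `X` with distortions `< s(M)/2`, then they induce the same partition of
`X`: the families `{R(i)}` and `{R'(i)}` coincide. -/
theorem partitions_coincide {M X : Type*} [MetricSpace M] [MetricSpace X]
    (h3 : 3 ≤ Cardinal.mk M)
    (R R' : Set (M × X)) (hR : IsCorrespondence R) (hR' : IsCorrespondence R')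
    (hdis : relDis R < sSpec M / 2) (hdis' : relDis R' < sSpec M / 2) :
    (Set.range fun i : M => {x : X | (i, x) ∈ R}) =
      (Set.range fun i : M => {x : X | (i, x) ∈ R'}) := by
  have hnt : Nontrivial M :=
    Cardinal.one_lt_iff_nontrivial.mp (lt_of_lt_of_le (by norm_num) h3)
  obtain ⟨a, b, hab⟩ := hnt
  have hstop : sSpec M ≠ ⊤ :=
    ne_top_of_le_ne_top (edist_ne_top a b) (sSpec_le' hab)
  have main : ∀ (S S' : Set (M × X)), IsCorrespondence S → IsCorrespondence S' →
      relDis S < sSpec M / 2 → relDis S' < sSpec M / 2 →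
      (Set.range fun i : M => {x : X | (i, x) ∈ S}) ⊆
        (Set.range fun i : M => {x : X | (i, x) ∈ S'}) := by
    rintro S S' hS hS' hd hd' _ ⟨i, rfl⟩
    obtain ⟨x, hx⟩ := hS.1 i
    obtain ⟨j, hj⟩ := hS'.2 x
    refine ⟨j, ?_⟩
    ext y
    simp only [Set.mem_setOf_eq]
    constructor
    · intro hy
      have h1 : edist x y < sSpec M / 2 := (key_lemma hstop hd' hj hy).mp rfl
      obtain ⟨k, hk⟩ := hS.2 y
      have : i = k := (key_lemma hstop hd hx hk).mpr h1
      exact this ▸ hk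
    · intro hy
      have h1 : edist x y < sSpec M / 2 := (key_lemma hstop hd hx hy).mp rfl
      obtain ⟨k, hk⟩ := hS'.2 y
      have : j = k := (key_lemma hstop hd' hj hk).mpr h1
      exact this ▸ hk
  exact Set.Subset.antisymm (main R R' hR hR' hdis hdis') (main R' R hR' hR hdis' hdis)
end

section
/- Let M be a metric space with s(M) > 0, and let a : M × M → ℝ be a symmetric function with a(i,i) = 0 for all i and |a(i,j)| < s(M) for all i, j. Suppose sup_{i,j} |a(i,j)| ≤ t(M)/3. Then the function ρ(i,j) = d(i,j) + a(i,j) is a metric on the underlying set of M. -/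
open scoped ENNReal

/-- Let `M` be a metric space with `s(M) > 0` and let `a` be a symmetric
perturbation vanishing on the diagonal with `|a i j| < s(M)` and `sup |a i j| ≤ t(M)/3`.
Then `ρ i j = dist i j + a i j` is a metric on the underlying set of `M`:
it is symmetric, nonnegative, vanishes exactly on the diagonal and satisfies the triangle
inequality. -/
theorem perturbed_metric {M : Type*} [MetricSpace M]
    (hs : 0 < sSpec M)
    (a : M → M → ℝ)
    (hsym : ∀ i j, a i j = a j i)
    (hdiag : ∀ i, a i i = 0)
    (hlt : ∀ i j, ENNReal.ofReal |a i j| < sSpec M)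
    (hsup : (⨆ (i : M) (j : M), ENNReal.ofReal |a i j|) ≤ tSpec M / 3) :
    (∀ i j, dist i j + a i j = dist j i + a j i) ∧
    (∀ i j, 0 ≤ dist i j + a i j) ∧
    (∀ i j, dist i j + a i j = 0 ↔ i = j) ∧
    (∀ i j k, dist i k + a i k ≤ (dist i j + a i j) + (dist j k + a j k)) := by
  -- key1: for distinct points, |a i j| < dist i j
  have key1 : ∀ i j : M, i ≠ j → |a i j| < dist i j := by
    intro i j hne
    have h1 : sSpec M ≤ edist i j := by
      refine iInf_le_of_le i (iInf_le_of_le j (iInf_le _ hne))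
    have h2 : ENNReal.ofReal |a i j| < ENNReal.ofReal (dist i j) := by
      calc ENNReal.ofReal |a i j| < sSpec M := hlt i j
        _ ≤ edist i j := h1
        _ = ENNReal.ofReal (dist i j) := edist_dist i j
    exact (ENNReal.ofReal_lt_ofReal_iff (dist_pos.mpr hne)).mp h2
  have key2 : ∀ i j k : M, i ≠ j → j ≠ k → i ≠ k →
      |a i j| + |a j k| + |a i k| ≤ dist i j + dist j k - dist i k := by
    intro i j k hij hjk hik
    have hD : (0:ℝ) ≤ dist i j + dist j k - dist i k := by
      have := dist_triangle i j k; linarith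
    have hsum : ENNReal.ofReal (|a i j| + |a j k| + |a i k|)
        ≤ ENNReal.ofReal (dist i j + dist j k - dist i k) := by
      have e1 : ENNReal.ofReal (|a i j| + |a j k| + |a i k|)
          = ENNReal.ofReal |a i j| + ENNReal.ofReal |a j k| + ENNReal.ofReal |a i k| := by
        rw [ENNReal.ofReal_add (by positivity) (abs_nonneg _),
          ENNReal.ofReal_add (abs_nonneg _) (abs_nonneg _)]
      have hle : ∀ x y : M, ENNReal.ofReal |a x y| ≤ tSpec M / 3 := by
        intro x y
        refine le_trans ?_ hsup
        exact le_trans (le_iSup (fun j => ENNReal.ofReal |a x j|) y)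
          (le_iSup (fun i => ⨆ j, ENNReal.ofReal |a i j|) x)
      have ht : tSpec M ≤ ENNReal.ofReal (dist i j + dist j k - dist i k) := by
        refine iInf_le_of_le i (iInf_le_of_le j (iInf_le_of_le k ?_))
        exact iInf_le_of_le hij (iInf_le_of_le hjk (iInf_le _ hik))
      calc ENNReal.ofReal (|a i j| + |a j k| + |a i k|)
          = ENNReal.ofReal |a i j| + ENNReal.ofReal |a j k| + ENNReal.ofReal |a i k| := e1
        _ ≤ tSpec M / 3 + tSpec M / 3 + tSpec M / 3 := by
            gcongr <;> exact hle _ _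
        _ = tSpec M := ENNReal.add_thirds _
        _ ≤ _ := ht
    have := (ENNReal.ofReal_le_ofReal_iff hD).mp hsum
    exact this
  have nonneg : ∀ i j : M, 0 ≤ dist i j + a i j := by
    intro i j
    by_cases h : i = j
    · subst h; simp [hdiag]
    · have h1 := key1 i j h
      have := abs_le.mp (le_of_lt h1)
      linarith [this.1]
  refine ⟨fun i j => by rw [dist_comm, hsym], nonneg, ?_, ?_⟩
  · intro i j
    constructor
    · intro h
      by_contra hne
      have h1 := abs_lt.mp (key1 i j hne)
      linarith [h1.1]
    · intro h; subst h; simp [hdiag]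
  · intro i j k
    by_cases hij : i = j
    · subst hij; simp [hdiag]
    by_cases hjk : j = k
    · subst hjk; simp [hdiag]
    by_cases hik : i = k
    · subst hik
      simp only [dist_self, hdiag]
      linarith [nonneg i j, nonneg j i]
    · have h2 := key2 i j k hij hjk hik
      have b1 := abs_le.mp (le_refl |a i j|)
      have b2 := abs_le.mp (le_refl |a j k|)
      have b3 := abs_le.mp (le_refl |a i k|)
      linarith [b1.1, b2.1, b3.1, b1.2, b2.2, b3.2, abs_nonneg (a i j), abs_nonneg (a j k), abs_nonneg (a i k)]
end

section
/- Let M be a finite metric space with at least 3 points and let a > 0 satisfy a ≤ t(M)/3, a < s(M), and a/2 < min{ s(M)/4, e(M)/4 }. Let ε, ε' : M × M → {−1, +1} be symmetric functions and define ρ(i,j) = d(i,j) + ε(i,j)·a and ρ'(i,j) = d(i,j) + ε'(i,j)·a for i ≠ j, with ρ(i,i) = ρ'(i,i) = 0; suppose ε(i0,j0) = ε'(i0,j0) for some pair i0 ≠ j0. Then for every t ∈ [0,1] the function ρ_t = (1−t)ρ + tρ' is a metric on the underlying set of M, the map t ↦ M^t = (M, ρ_t) is a continuous curve in GHSpace,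 and d_GH(M, M^t) = a/2 for all t ∈ [0,1]. -/
open scoped ENNReal

/-- The point of the Gromov–Hausdorff space determined by a metric-space structure `m` on a
finite nonempty type `M` (a finite metric space is compact). -/
noncomputable def toGHpt {M : Type} [Finite M] [Nonempty M] (m : MetricSpace M) :
    GromovHausdorff.GHSpace :=
  letI := m
  GromovHausdorff.toGHSpace M

/-! ### Auxiliary material -/

/-- Build a metric space structure from a distance function. -/
noncomputable def mkFinMetric {M : Type} (ρ : M → M → ℝ) (h0 : ∀ i, ρ i i = 0)
    (hsym : ∀ i j, ρ i j = ρ j i) (htri : ∀ i j k, ρ i k ≤ ρ i j + ρ j k)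
    (heq : ∀ i j, ρ i j = 0 → i = j) : MetricSpace M where
  dist := ρ
  dist_self := h0
  dist_comm := hsym
  dist_triangle x y z := htri x y z
  eq_of_dist_eq_zero := heq _ _

/-- If there is a bijection of distortion at most `D` between two compact metric spaces,
their Gromov–Hausdorff distance is at most `D / 2`. -/
lemma aux_ghDist_le_half {X : Type*} {Y : Type*} [mX : MetricSpace X] [cX : CompactSpace X]
    [nX : Nonempty X] [mY : MetricSpace Y] [cY : CompactSpace Y] [nY : Nonempty Y]
    (f : X ≃ Y) {D : ℝ} (H : ∀ x y : X, |dist x y - dist (f x) (f y)| ≤ D) :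
    GromovHausdorff.ghDist X Y ≤ D / 2 := by
  have h := GromovHausdorff.ghDist_le_of_approx_subsets (X := X) (Y := Y)
    (s := (Set.univ : Set X)) (fun x => f x) (ε₁ := 0) (ε₂ := D) (ε₃ := 0)
    (fun x => ⟨x, trivial, by simp⟩)
    (fun y => ⟨⟨f.symm y, trivial⟩, by simp⟩)
    (fun x y => by simpa [Subtype.dist_eq] using H x y)
  linarith

/-- If the Gromov–Hausdorff distance between two compact spaces is `< r`, there is a
correspondence between them of distortion `< 2 r`. -/
lemma aux_exists_corr {X : Type*} {Y : Type*} [mX : MetricSpace X] [cX : CompactSpace X]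
    [nX : Nonempty X] [mY : MetricSpace Y] [cY : CompactSpace Y] [nY : Nonempty Y]
    {r : ℝ} (h : GromovHausdorff.ghDist X Y < r) :
    ∃ R : Set (X × Y), ((∀ x : X, ∃ y : Y, (x, y) ∈ R) ∧ ∀ y : Y, ∃ x : X, (x, y) ∈ R) ∧
      ∀ p ∈ R, ∀ q ∈ R, |dist p.1 q.1 - dist p.2 q.2| < 2 * r := by
  classical
  set Z := GromovHausdorff.OptimalGHCoupling X Y
  set Φ : X → Z := GromovHausdorff.optimalGHInjl X Y with hΦdef
  set Ψ : Y → Z := GromovHausdorff.optimalGHInjr X Y with hΨdef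
  have hΦ : Isometry Φ := GromovHausdorff.isometry_optimalGHInjl X Y
  have hΨ : Isometry Ψ := GromovHausdorff.isometry_optimalGHInjr X Y
  have hH : Metric.hausdorffDist (Set.range Φ) (Set.range Ψ) < r := by
    rw [hΦdef, hΨdef, GromovHausdorff.hausdorffDist_optimal]; exact h
  have hfin : EMetric.hausdorffEdist (Set.range Φ) (Set.range Ψ) ≠ ⊤ :=
    Metric.hausdorffEdist_ne_top_of_nonempty_of_bounded (Set.range_nonempty _)
      (Set.range_nonempty _) (isCompact_range hΦ.continuous).isBounded
      (isCompact_range hΨ.continuous).isBounded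
  refine ⟨{p | dist (Φ p.1) (Ψ p.2) < r}, ⟨?_, ?_⟩, ?_⟩
  · intro x
    obtain ⟨z, hz, hd⟩ :=
      Metric.exists_dist_lt_of_hausdorffDist_lt (Set.mem_range_self x) hH hfin
    obtain ⟨y, rfl⟩ := hz
    exact ⟨y, hd⟩
  · intro y
    obtain ⟨z, hz, hd⟩ :=
      Metric.exists_dist_lt_of_hausdorffDist_lt' (Set.mem_range_self y) hH hfin
    obtain ⟨x, rfl⟩ := hz
    exact ⟨x, hd⟩
  · rintro ⟨x, y⟩ hp ⟨x', y'⟩ hq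
    simp only [Set.mem_setOf_eq] at hp hq
    have e1 : dist x x' = dist (Φ x) (Φ x') := (hΦ.dist_eq x x').symm
    have e2 : dist y y' = dist (Ψ y) (Ψ y') := (hΨ.dist_eq y y').symm
    have t1 := dist_triangle4 (Φ x) (Ψ y) (Ψ y') (Φ x')
    have t2 := dist_triangle4 (Ψ y) (Φ x) (Φ x') (Ψ y')
    have c1 : dist (Ψ y') (Φ x') = dist (Φ x') (Ψ y') := dist_comm _ _
    have c2 : dist (Ψ y) (Φ x) = dist (Φ x) (Ψ y) := dist_comm _ _
    rw [abs_sub_lt_iff]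
    constructor
    · simp only [e1, e2]; linarith
    · simp only [e1, e2]; linarith

/-- The clamping of `t` to `[0,1]`. -/
noncomputable def piAux (t : ℝ) : ℝ := max 0 (min t 1)

/-- The convex combination of the two sign functions, with clamped parameter. -/
noncomputable def cAux {M : Type} (ε ε' : M → M → ℝ) (t : ℝ) (i j : M) : ℝ :=
  (1 - piAux t) * ε i j + piAux t * ε' i j

/-- The perturbed distance function. -/
noncomputable def rhoAux {M : Type} [MetricSpace M] (ε ε' : M → M → ℝ) (a t : ℝ) (i j : M) :
    ℝ :=
  letI := Classical.decEq M
  if i = j then 0 else dist i j + cAux ε ε' t i j * a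

/-- Let `M` be a finite metric space with at least 3 points and let
`a > 0` satisfy `a ≤ t(M)/3`, `a < s(M)` and `a/2 < min (s(M)/4) (e(M)/4)`.  Given two
symmetric sign functions `ε, ε'` agreeing on some pair of distinct points, the convex
combinations `ρ_t = (1−t)ρ + tρ'` of the perturbed metrics `ρ = d + εa`, `ρ' = d + ε'a`
are metrics, the map `t ↦ (M, ρ_t)` is a continuous curve in `GHSpace`, and every point
of this curve lies at Gromov–Hausdorff distance exactly `a/2` from `M`. -/
theorem curve_of_perturbed_metrics {M : Type} [MetricSpace M] [Fintype M] [Nonempty M]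
    (h3 : 3 ≤ Fintype.card M)
    (a : ℝ) (ha : 0 < a)
    (haT : ENNReal.ofReal a ≤ tSpec M / 3)
    (haS : ENNReal.ofReal a < sSpec M)
    (haE : ENNReal.ofReal (a / 2) < min (sSpec M / 4) (eSpec M / 4))
    (ε ε' : M → M → ℝ)
    (hεsym : ∀ i j, ε i j = ε j i) (hε'sym : ∀ i j, ε' i j = ε' j i)
    (hεval : ∀ i j, ε i j = 1 ∨ ε i j = -1)
    (hε'val : ∀ i j, ε' i j = 1 ∨ ε' i j = -1)
    (i0 j0 : M) (hij : i0 ≠ j0) (hagree : ε i0 j0 = ε' i0 j0) :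
    ∃ m : ℝ → MetricSpace M,
      (∀ t ∈ Set.Icc (0 : ℝ) 1, ∀ i j : M, i ≠ j →
        @dist M (m t).toDist i j = dist i j + ((1 - t) * ε i j + t * ε' i j) * a) ∧
      ContinuousOn (fun t => toGHpt (m t)) (Set.Icc (0 : ℝ) 1) ∧
      ∀ t ∈ Set.Icc (0 : ℝ) 1,
        dist (GromovHausdorff.toGHSpace M) (toGHpt (m t)) = a / 2 := by
  classical
  -- Real-valued consequences of the `ℝ≥0∞`-valued hypotheses.
  have hS : ∀ i j : M, i ≠ j → a < dist i j := by
    intro i j hij'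
    have h1 : sSpec M ≤ edist i j :=
      iInf_le_of_le i (iInf_le_of_le j (iInf_le_of_le hij' le_rfl))
    have h2 := lt_of_lt_of_le haS h1
    rw [edist_dist] at h2
    exact (ENNReal.ofReal_lt_ofReal_iff_of_nonneg ha.le).mp h2
  have hS2 : ∀ i j : M, i ≠ j → 2 * a < dist i j := by
    intro i j hij'
    have h1 : sSpec M ≤ edist i j :=
      iInf_le_of_le i (iInf_le_of_le j (iInf_le_of_le hij' le_rfl))
    have h2 : ENNReal.ofReal (a / 2) < edist i j / 4 :=
      lt_of_lt_of_le (lt_of_lt_of_le haE (min_le_left _ _)) (ENNReal.div_le_div_right h1 4)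
    have h3' := ENNReal.mul_lt_of_lt_div h2
    rw [edist_dist] at h3'
    have h4 : ENNReal.ofReal (a / 2) * 4 = ENNReal.ofReal (2 * a) := by
      rw [show (4 : ℝ≥0∞) = ENNReal.ofReal 4 by simp, ← ENNReal.ofReal_mul (by linarith)]
      congr 1; ring
    rw [h4] at h3'
    exact (ENNReal.ofReal_lt_ofReal_iff_of_nonneg (by linarith)).mp h3'
  have hT : ∀ i j k : M, i ≠ j → j ≠ k → i ≠ k →
      3 * a ≤ dist i j + dist j k - dist i k := by
    intro i j k hij' hjk' hik'
    have h1 : tSpec M ≤ ENNReal.ofReal (dist i j + dist j k - dist i k) :=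
      iInf_le_of_le i <| iInf_le_of_le j <| iInf_le_of_le k <|
        iInf_le_of_le hij' <| iInf_le_of_le hjk' <| iInf_le_of_le hik' le_rfl
    have h2 : ENNReal.ofReal a ≤ ENNReal.ofReal (dist i j + dist j k - dist i k) / 3 :=
      le_trans haT (ENNReal.div_le_div_right h1 3)
    have h3' := (ENNReal.le_div_iff_mul_le (Or.inl (by norm_num))
      (Or.inl (by norm_num))).mp h2
    have h4 : ENNReal.ofReal a * 3 = ENNReal.ofReal (3 * a) := by
      rw [show (3 : ℝ≥0∞) = ENNReal.ofReal 3 by simp, ← ENNReal.ofReal_mul ha.le]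
      congr 1; ring
    rw [h4] at h3'
    have hd : 0 ≤ dist i j + dist j k - dist i k := by
      have := dist_triangle i j k; linarith
    exact (ENNReal.ofReal_le_ofReal_iff hd).mp h3'
  have hE : ∀ f : M ≃ M, f ≠ Equiv.refl M →
      ∃ x y : M, 2 * a < |dist x y - dist (f x) (f y)| := by
    intro f hf
    have h1 : eSpec M ≤ mapDis (f : M → M) := iInf_le_of_le f (iInf_le_of_le hf le_rfl)
    have h2 : ENNReal.ofReal (a / 2) < mapDis (f : M → M) / 4 :=
      lt_of_lt_of_le (lt_of_lt_of_le haE (min_le_right _ _)) (ENNReal.div_le_div_right h1 4)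
    have h3' := ENNReal.mul_lt_of_lt_div h2
    have h4 : ENNReal.ofReal (a / 2) * 4 = ENNReal.ofReal (2 * a) := by
      rw [show (4 : ℝ≥0∞) = ENNReal.ofReal 4 by simp, ← ENNReal.ofReal_mul (by linarith)]
      congr 1; ring
    rw [h4, mapDis, lt_iSup_iff] at h3'
    obtain ⟨x, h3'⟩ := h3'
    rw [lt_iSup_iff] at h3'
    obtain ⟨y, h3'⟩ := h3'
    exact ⟨x, y, (ENNReal.ofReal_lt_ofReal_iff_of_nonneg (by linarith)).mp h3'⟩
  -- Basic facts about the sign functions and the clamped parameter.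
  have hab : ∀ i j : M, |ε i j| = 1 := fun i j => by rcases hεval i j with h | h <;> simp [h]
  have hab' : ∀ i j : M, |ε' i j| = 1 := fun i j => by rcases hε'val i j with h | h <;> simp [h]
  have hπmem : ∀ t : ℝ, piAux t ∈ Set.Icc (0 : ℝ) 1 :=
    fun t => ⟨le_max_left _ _, max_le zero_le_one (min_le_right _ _)⟩
  have hπeq : ∀ t ∈ Set.Icc (0 : ℝ) 1, piAux t = t := by
    intro t ht
    simp only [piAux]
    rw [min_eq_left ht.2, max_eq_right ht.1]
  have hc1 : ∀ (t : ℝ) (i j : M), |cAux ε ε' t i j| ≤ 1 := by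
    intro t i j
    obtain ⟨h0', h1'⟩ := hπmem t
    calc |cAux ε ε' t i j| ≤ |(1 - piAux t) * ε i j| + |piAux t * ε' i j| := abs_add_le _ _
      _ = (1 - piAux t) * |ε i j| + piAux t * |ε' i j| := by
          rw [abs_mul, abs_mul, abs_of_nonneg (by linarith), abs_of_nonneg h0']
      _ = 1 := by rw [hab, hab']; ring
  have hca : ∀ (t : ℝ) (i j : M), |cAux ε ε' t i j * a| ≤ a := by
    intro t i j
    rw [abs_mul, abs_of_pos ha]
    nlinarith [hc1 t i j, abs_nonneg (cAux ε ε' t i j)]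
  -- The perturbed distance functions and their metric-space axioms.
  have hρval : ∀ (t : ℝ) (i j : M), i ≠ j →
      rhoAux ε ε' a t i j = dist i j + cAux ε ε' t i j * a := by
    intro t i j h; simp only [rhoAux, if_neg h]
  have h0 : ∀ (t : ℝ) (i : M), rhoAux ε ε' a t i i = 0 := by
    intro t i; simp [rhoAux]
  have hρpos : ∀ (t : ℝ) (i j : M), i ≠ j → 0 < rhoAux ε ε' a t i j := by
    intro t i j h
    rw [hρval t i j h]
    have h1 := hS i j h
    have h2 := (abs_le.mp (hca t i j)).1
    linarith
  have hsymρ : ∀ (t : ℝ) (i j : M), rhoAux ε ε' a t i j = rhoAux ε ε' a t j i := by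
    intro t i j
    by_cases h : i = j
    · subst h; rfl
    · have h' : j ≠ i := fun hh => h hh.symm
      rw [hρval t i j h, hρval t j i h', dist_comm]
      have : cAux ε ε' t i j = cAux ε ε' t j i := by
        simp only [cAux]; rw [hεsym i j, hε'sym i j]
      rw [this]
  have htriρ : ∀ (t : ℝ) (i j k : M),
      rhoAux ε ε' a t i k ≤ rhoAux ε ε' a t i j + rhoAux ε ε' a t j k := by
    intro t i j k
    by_cases hik : i = k
    · subst hik
      rw [h0]
      by_cases hij' : i = j
      · subst hij'; rw [h0]; simp
      · have p1 := hρpos t i j hij'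
        have p2 := hρpos t j i (fun hh => hij' hh.symm)
        linarith
    · by_cases hij' : i = j
      · subst hij'; rw [h0, zero_add]
      · by_cases hjk : j = k
        · subst hjk; rw [h0, add_zero]
        · rw [hρval t i k hik, hρval t i j hij', hρval t j k hjk]
          have h1 := hT i j k hij' hjk hik
          have h2 := (abs_le.mp (hca t i j)).1
          have h3' := (abs_le.mp (hca t j k)).1
          have h4 := (abs_le.mp (hca t i k)).2
          linarith
  have heqz : ∀ (t : ℝ) (i j : M), rhoAux ε ε' a t i j = 0 → i = j := by
    intro t i j h
    by_contra hne
    exact absurd h (ne_of_gt (hρpos t i j hne))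
  -- The family of metric spaces.
  set m : ℝ → MetricSpace M := fun t =>
    mkFinMetric (rhoAux ε ε' a t) (h0 t) (hsymρ t) (htriρ t) (heqz t) with hmdef
  have hcomp : ∀ mm : MetricSpace M, @CompactSpace M mm.toUniformSpace.toTopologicalSpace :=
    fun mm => @Finite.compactSpace M mm.toUniformSpace.toTopologicalSpace _
  -- Distortion of the identity between the original metric and the perturbed one.
  have hD1 : ∀ (t : ℝ) (x y : M), |dist x y - rhoAux ε ε' a t x y| ≤ a := by
    intro t x y
    by_cases hxy : x = y
    · subst hxy; rw [h0, dist_self, sub_zero, abs_zero]; exact ha.le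
    · rw [hρval t x y hxy]
      have heq' : dist x y - (dist x y + cAux ε ε' t x y * a) = -(cAux ε ε' t x y * a) := by
        ring
      rw [heq', abs_neg]
      exact hca t x y
  refine ⟨m, ?_, ?_, ?_⟩
  · -- the formula for the distances
    intro t ht i j hij'
    show rhoAux ε ε' a t i j = dist i j + ((1 - t) * ε i j + t * ε' i j) * a
    rw [hρval t i j hij']
    simp only [cAux]
    rw [hπeq t ht]
  · -- continuity
    have hρdiff : ∀ (t s : ℝ) (x y : M),
        |rhoAux ε ε' a t x y - rhoAux ε ε' a s x y| ≤ 2 * a * |piAux t - piAux s| := by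
      intro t s x y
      by_cases hxy : x = y
      · subst hxy
        rw [h0, h0, sub_zero, abs_zero]
        positivity
      · rw [hρval t x y hxy, hρval s x y hxy]
        have hdiff : dist x y + cAux ε ε' t x y * a - (dist x y + cAux ε ε' s x y * a)
            = (piAux t - piAux s) * ((ε' x y - ε x y) * a) := by
          simp only [cAux]; ring
        rw [hdiff, abs_mul]
        have h1 : |(ε' x y - ε x y) * a| ≤ 2 * a := by
          rw [abs_mul, abs_of_pos ha]
          have h2 := abs_sub (ε' x y) (ε x y)
          rw [hab, hab'] at h2
          nlinarith
        have h3' : (0 : ℝ) ≤ |piAux t - piAux s| := abs_nonneg _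
        nlinarith
    have hK : LipschitzOnWith (Real.toNNReal (a)) (fun t => toGHpt (m t))
        (Set.Icc (0 : ℝ) 1) := by
      apply LipschitzOnWith.of_dist_le_mul
      intro t ht s hs
      have key : @GromovHausdorff.ghDist M M (m s) ‹Nonempty M› (hcomp (m s)) (m t)
          ‹Nonempty M› (hcomp (m t)) ≤ (2 * a * |t - s|) / 2 := by
        refine aux_ghDist_le_half (mX := m s) (cX := hcomp (m s)) (mY := m t)
          (cY := hcomp (m t)) (Equiv.refl M) ?_
        intro x y
        have h5 := hρdiff s t x y
        rw [hπeq t ht, hπeq s hs] at h5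
        have h6 : |s - t| = |t - s| := abs_sub_comm s t
        rw [h6] at h5
        exact h5
      have key2 : dist (toGHpt (m s)) (toGHpt (m t)) ≤ (2 * a * |t - s|) / 2 := key
      rw [dist_comm (toGHpt (m s)) (toGHpt (m t))] at key2
      rw [Real.coe_toNNReal a ha.le, Real.dist_eq]
      linarith
    exact hK.continuousOn
  · -- the Gromov–Hausdorff distance is exactly `a/2`
    intro t ht
    refine le_antisymm ?_ ?_
    · -- upper bound
      have h := aux_ghDist_le_half (X := M) (Y := M) (mY := m t) (cY := hcomp (m t))
        (Equiv.refl M) (D := a) (fun x y => hD1 t x y)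
      exact h
    · -- lower bound
      by_contra hcon
      push_neg at hcon
      have hcon' : @GromovHausdorff.ghDist M M _ ‹Nonempty M› _ (m t)
          ‹Nonempty M› (hcomp (m t)) < a / 2 := hcon
      obtain ⟨R, ⟨hR1, hR2⟩, hRd⟩ := aux_exists_corr (mY := m t) (cY := hcomp (m t)) hcon'
      have hRd' : ∀ x y x' y' : M, (x, y) ∈ R → (x', y') ∈ R →
          |dist x x' - rhoAux ε ε' a t y y'| < a := by
        intro x y x' y' h1 h2
        have h3' := hRd (x, y) h1 (x', y') h2
        have h4 : 2 * (a / 2) = a := by ring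
        rw [h4] at h3'
        exact h3'
      choose g hg using hR1
      have huniq : ∀ x y y' : M, (x, y) ∈ R → (x, y') ∈ R → y = y' := by
        intro x y y' h1 h2
        by_contra hne
        have hd := hRd' x y x y' h1 h2
        rw [dist_self, zero_sub, abs_neg, abs_of_pos (hρpos t y y' hne),
          hρval t y y' hne] at hd
        have h2a := hS2 y y' hne
        have hc2 := (abs_le.mp (hca t y y')).1
        linarith
      have hinj : Function.Injective g := by
        intro x x' hxx
        by_contra hne
        have hd := hRd' x (g x) x' (g x') (hg x) (hg x')
        rw [hxx, h0, sub_zero, abs_of_nonneg dist_nonneg] at hd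
        exact absurd hd (not_lt.mpr (hS x x' hne).le)
      have hsurj : Function.Surjective g := by
        intro y
        obtain ⟨x, hx⟩ := hR2 y
        exact ⟨x, huniq x (g x) y (hg x) hx⟩
      by_cases hgid : ∀ x, g x = x
      · have hi : (i0, i0) ∈ R := by have := hg i0; rwa [hgid i0] at this
        have hj : (j0, j0) ∈ R := by have := hg j0; rwa [hgid j0] at this
        have hd := hRd' i0 i0 j0 j0 hi hj
        rw [hρval t i0 j0 hij] at hd
        have hcval : cAux ε ε' t i0 j0 = ε i0 j0 := by
          simp only [cAux, ← hagree]; ring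
        have heq' : dist i0 j0 - (dist i0 j0 + cAux ε ε' t i0 j0 * a)
            = -(cAux ε ε' t i0 j0 * a) := by ring
        rw [heq', abs_neg, abs_mul, hcval, hab i0 j0, one_mul, abs_of_pos ha] at hd
        exact absurd hd (lt_irrefl a)
      · push_neg at hgid
        obtain ⟨x1, hx1⟩ := hgid
        have hf : M ≃ M := Equiv.ofBijective g ⟨hinj, hsurj⟩
        set f : M ≃ M := Equiv.ofBijective g ⟨hinj, hsurj⟩ with hfdef
        have hfx : ∀ x, f x = g x := fun x => rfl
        have hfne : f ≠ Equiv.refl M := by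
          intro hcontr
          apply hx1
          have h5 := congrArg (fun e : M ≃ M => e x1) hcontr
          simpa [hfx] using h5
        obtain ⟨x, y, hxy⟩ := hE f hfne
        simp only [hfx] at hxy
        have h2 := hRd' x (g x) y (g y) (hg x) (hg y)
        have h3' := hD1 t (g x) (g y)
        have h4 := abs_sub_le (dist x y) (rhoAux ε ε' a t (g x) (g y)) (dist (g x) (g y))
        have h5 : |rhoAux ε ε' a t (g x) (g y) - dist (g x) (g y)| ≤ a := by
          rw [abs_sub_comm]; exact h3'
        linarith
end

section
/- Let M be a finite metric space with at least 3 points that is generic, i.e., s(M) > 0, t(M) > 0, and e(M) > 0. Let r satisfy 0 < r < min{ s(M)/4, e(M)/4, t(M)/6 }. Then the sphere S_r(M) = { X ∈ GHSpace : dist(M, X) = r } of radius r centered at (the isometry class of) M is a path-connected subset of GHSpace. -/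
open scoped ENNReal

/-!
A compact `X` at distance `r` from `M` comes with a nearest-point map `g : X → M` (from an optimal
coupling) that is surjective and changes distances by at most `2r`, and by exactly `2r` for some
pair. Conversely such a `g` forces `d_GH(M, X) = r`: a better correspondence would be constant on
the fibres of `g` (as `4r < s(M)`), hence induce a bijection of `M` of distortion `< 4r`, which is
the identity (as `4r < e(M)`); so it would be `g` itself, which is stretched by `2r` somewhere.
Hence one may deform the metric of `X` freely as long as `g` keeps these properties. This joins
`X` to the space `Z` obtained from `M` by adding `2r` to all nonzero distances: first raise the
distances between the fibres over one pair of points of `M` until some pair there is stretched by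
exactly `2r` (the triangle inequality survives since `6r < t(M)`; with three points the chosen
pair can avoid the pair realizing `2r` so far), then interpolate linearly to the pull-back of `Z`
along `g`.
-/

open GromovHausdorff Metric Set Function

theorem mul_lt_of_ofReal_lt_div {r d c : ℝ} {e : ℝ≥0∞} (hc : 0 < c)
    (h : ENNReal.ofReal r < e / ENNReal.ofReal c) (hd : e ≤ ENNReal.ofReal d) : c * r < d := by
  have h' := h.trans_le (ENNReal.div_le_div_right hd _)
  rw [← ENNReal.ofReal_div_of_pos hc, ENNReal.ofReal_lt_ofReal_iff'] at h'
  linarith [(lt_div_iff₀' hc).1 h'.1]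

section Spectra

variable {M : Type} [MetricSpace M]

theorem sSpec_le_edist {m m' : M} (h : m ≠ m') : sSpec M ≤ edist m m' :=
  (iInf₂_le m m').trans (iInf_le _ h)

theorem tSpec_le {x y z : M} (hxy : x ≠ y) (hyz : y ≠ z) (hxz : x ≠ z) :
    tSpec M ≤ ENNReal.ofReal (dist x y + dist y z - dist x z) :=
  (iInf₂_le x y).trans <| (iInf₂_le z hxy).trans <| iInf₂_le hyz hxz

theorem eSpec_le_mapDis {f : M ≃ M} (h : f ≠ Equiv.refl M) : eSpec M ≤ mapDis f :=
  iInf₂_le f h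

end Spectra

/-- The conditions `4r < s(M)`, `4r < e(M)`, `6r < t(M)` in real-valued form. -/
structure IsSmallRadius (M : Type) [MetricSpace M] (r : ℝ) : Prop where
  pos : 0 < r
  sep : ∀ m m' : M, m ≠ m' → 4 * r < dist m m'
  rigid : ∀ f : M ≃ M, (∀ m m', |dist m m' - dist (f m) (f m')| ≤ 4 * r) → f = Equiv.refl M
  triangle : ∀ x y z : M, x ≠ y → y ≠ z → x ≠ z → 6 * r < dist x y + dist y z - dist x z

namespace IsSmallRadius

variable {M : Type} [MetricSpace M] {r : ℝ}

theorem of_lt (hr0 : 0 < r)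
    (hr : ENNReal.ofReal r < min (sSpec M / 4) (min (eSpec M / 4) (tSpec M / 6))) :
    IsSmallRadius M r where
  pos := hr0
  sep m m' hne := by
    refine mul_lt_of_ofReal_lt_div (e := sSpec M) (by norm_num) ?_
      ((sSpec_le_edist hne).trans (edist_dist m m').le)
    rw [ENNReal.ofReal_ofNat]
    exact hr.trans_le (min_le_left _ _)
  rigid f hf := by
    by_contra hne
    have hdis : eSpec M ≤ ENNReal.ofReal (4 * r) := (eSpec_le_mapDis hne).trans <|
      iSup₂_le fun m m' => ENNReal.ofReal_le_ofReal (hf m m')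
    refine (mul_lt_of_ofReal_lt_div (by norm_num) ?_ hdis).false
    rw [ENNReal.ofReal_ofNat]
    exact hr.trans_le ((min_le_right _ _).trans (min_le_left _ _))
  triangle x y z hxy hyz hxz := by
    refine mul_lt_of_ofReal_lt_div (by norm_num) ?_ (tSpec_le hxy hyz hxz)
    rw [ENNReal.ofReal_ofNat]
    exact hr.trans_le ((min_le_right _ _).trans (min_le_right _ _))

end IsSmallRadius

theorem exists_dist_le_hausdorffDist {α : Type*} [MetricSpace α] {s t : Set α}
    (hs : IsCompact s) (ht : IsCompact t) (hs' : s.Nonempty) (ht' : t.Nonempty) {x : α}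
    (hx : x ∈ s) : ∃ y ∈ t, dist x y ≤ hausdorffDist s t := by
  obtain ⟨y, hy, hxy⟩ := ht.exists_infDist_eq_dist ht' x
  exact ⟨y, hy, hxy ▸ infDist_le_hausdorffDist_of_mem hx
    (hausdorffEDist_ne_top_of_nonempty_of_bounded hs' ht' hs.isBounded ht.isBounded)⟩

section GromovHausdorff

variable {X Y : Type} [MetricSpace X] [CompactSpace X] [Nonempty X]
  [MetricSpace Y] [CompactSpace Y] [Nonempty Y]

theorem dist_toGHSpace_le_of_surjective {g : X → Y} (hg : Surjective g) {ε : ℝ}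
    (h : ∀ x x', |dist x x' - dist (g x) (g x')| ≤ 2 * ε) :
    dist (toGHSpace X) (toGHSpace Y) ≤ ε := by
  have := ghDist_le_of_approx_subsets (s := univ) (fun x => g x) (ε₁ := 0) (ε₃ := 0)
    (fun x => ⟨x, mem_univ x, (dist_self x).le⟩)
    (fun y => ⟨⟨surjInv hg y, mem_univ _⟩, by simp [surjInv_eq hg y]⟩)
    (fun x x' => h x x')
  simpa [ghDist] using this

theorem exists_map_of_dist_toGHSpace :
    ∃ φ : X → Y,
      (∀ x x', |dist x x' - dist (φ x) (φ x')| ≤ 2 * dist (toGHSpace X) (toGHSpace Y)) ∧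
      ∀ y, ∃ x, dist (φ x) y ≤ 2 * dist (toGHSpace X) (toGHSpace Y) := by
  obtain ⟨Φ, Ψ, hΦ, hΨ, hD⟩ := ghDist_eq_hausdorffDist X Y
  rw [ghDist] at hD
  have hcΦ : IsCompact (range Φ) := isCompact_range hΦ.continuous
  have hcΨ : IsCompact (range Ψ) := isCompact_range hΨ.continuous
  have hXY (x : X) : ∃ y, dist (Φ x) (Ψ y) ≤ dist (toGHSpace X) (toGHSpace Y) := by
    obtain ⟨_, ⟨y, rfl⟩, hy⟩ := exists_dist_le_hausdorffDist hcΦ hcΨ (range_nonempty _)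
      (range_nonempty _) (mem_range_self x)
    exact ⟨y, hD ▸ hy⟩
  have hYX (y : Y) : ∃ x, dist (Ψ y) (Φ x) ≤ dist (toGHSpace X) (toGHSpace Y) := by
    obtain ⟨_, ⟨x, rfl⟩, hx⟩ := exists_dist_le_hausdorffDist hcΨ hcΦ (range_nonempty _)
      (range_nonempty _) (mem_range_self y)
    exact ⟨x, by rwa [hausdorffDist_comm, ← hD] at hx⟩
  choose φ hφ using hXY
  refine ⟨φ, fun x x' => ?_, fun y => ?_⟩
  · have := dist_dist_dist_le (Φ x) (Φ x') (Ψ (φ x)) (Ψ (φ x'))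
    rw [Real.dist_eq, hΦ.dist_eq, hΨ.dist_eq] at this
    linarith [hφ x, hφ x']
  · obtain ⟨x, hx⟩ := hYX y
    refine ⟨x, ?_⟩
    rw [← hΨ.dist_eq]
    linarith [dist_triangle (Ψ (φ x)) (Φ x) (Ψ y), dist_comm (Ψ (φ x)) (Φ x), hφ x,
      dist_comm (Φ x) (Ψ y)]

end GromovHausdorff

theorem JoinedIn.of_dist_le_mul {α : Type*} [PseudoMetricSpace α] {S : Set α}
    (γ : unitInterval → α) (K : ℝ) (hγ : ∀ s t, dist (γ s) (γ t) ≤ K * dist s t)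
    (hS : ∀ t, γ t ∈ S) : JoinedIn S (γ 0) (γ 1) := by
  have hγ' (s t : unitInterval) : dist (γ s) (γ t) ≤ K.toNNReal * dist s t :=
    (hγ s t).trans (mul_le_mul_of_nonneg_right (Real.le_coe_toNNReal K) dist_nonneg)
  exact ⟨⟨⟨γ, (LipschitzWith.of_dist_le_mul hγ').continuous⟩, rfl, rfl⟩, hS⟩

theorem JoinedIn.of_dist_le_mul_of_lt_one {α : Type*} [PseudoMetricSpace α] {S : Set α} {b : α}
    (f : ∀ t : unitInterval, (t : ℝ) < 1 → α) (K : ℝ)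
    (hf : ∀ s t hs ht, dist (f s hs) (f t ht) ≤ K * dist s t)
    (hb : ∀ t ht, dist (f t ht) b ≤ K * (1 - t)) (hS : ∀ t ht, f t ht ∈ S) (hbS : b ∈ S) :
    JoinedIn S (f 0 zero_lt_one) b := by
  let γ (t : unitInterval) : α := if h : (t : ℝ) < 1 then f t h else b
  have hγ1 (t : unitInterval) (ht : ¬ (t : ℝ) < 1) : (t : ℝ) = 1 := le_antisymm t.2.2 (not_lt.1 ht)
  have hb' (s t : unitInterval) (hs : (s : ℝ) < 1) (ht : ¬ (t : ℝ) < 1) :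
      dist (f s hs) b ≤ K * dist s t := by
    rw [Subtype.dist_eq, Real.dist_eq, hγ1 t ht, abs_sub_comm, abs_of_pos (by linarith)]
    exact hb s hs
  have := JoinedIn.of_dist_le_mul (S := S) γ K (fun s t => ?_) (fun t => ?_)
  · simpa [γ] using this
  · by_cases hs : (s : ℝ) < 1 <;> by_cases ht : (t : ℝ) < 1 <;>
      simp only [γ, hs, ht, dif_pos, dif_neg, not_false_eq_true]
    · exact hf s t hs ht
    · exact hb' s t hs ht
    · rw [dist_comm, dist_comm s]; exact hb' t s ht hs
    · rw [dist_self, Subtype.ext ((hγ1 s hs).trans (hγ1 t ht).symm), dist_self, mul_zero]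
  · by_cases ht : (t : ℝ) < 1 <;> simp only [γ, ht, dif_pos, dif_neg, not_false_eq_true]
    exacts [hS t ht, hbS]

theorem isLocallyConstant_of_lt_imp_eq {X Y : Type*} [TopologicalSpace X] {d : X → X → ℝ}
    (hd : Continuous fun p : X × X => d p.1 p.2) (hd0 : ∀ x, d x x = 0) {δ : ℝ} (hδ : 0 < δ)
    {g : X → Y} (hg : ∀ x y, d x y < δ → g x = g y) : IsLocallyConstant g := by
  refine (IsLocallyConstant.iff_eventually_eq g).2 fun x => ?_
  have : Continuous fun y => d x y := hd.comp (continuous_const.prodMk continuous_id)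
  filter_upwards [this.continuousAt.eventually (gt_mem_nhds (hd0 x ▸ hδ))] with y hy
  exact (hg x y hy).symm

@[ext]
structure ContinuousMetric (X : Type) [TopologicalSpace X] where
  toFun : X → X → ℝ
  apply_self' : ∀ x, toFun x x = 0
  symm' : ∀ x y, toFun x y = toFun y x
  triangle' : ∀ x y z, toFun x z ≤ toFun x y + toFun y z
  pos' : ∀ x y, x ≠ y → 0 < toFun x y
  continuous' : Continuous fun p : X × X => toFun p.1 p.2

namespace ContinuousMetric

variable {X : Type} [TopologicalSpace X]

instance : CoeFun (ContinuousMetric X) fun _ => X → X → ℝ := ⟨toFun⟩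

/-- `X` with the metric `d`: a type synonym, so that several metrics on `X` can coexist. -/
def Carrier (_ : ContinuousMetric X) : Type := X

instance (d : ContinuousMetric X) : MetricSpace d.Carrier where
  dist := d
  dist_self := d.apply_self'
  dist_comm := d.symm'
  dist_triangle := d.triangle'
  eq_of_dist_eq_zero {x y} h := by_contra fun hne => (d.pos' x y hne).ne' h

theorem nonneg (d : ContinuousMetric X) (x y : X) : 0 ≤ d x y := dist_nonneg (α := d.Carrier)

def toCarrier (d : ContinuousMetric X) : X → d.Carrier := id

theorem surjective_toCarrier (d : ContinuousMetric X) : Surjective d.toCarrier := surjective_id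

theorem continuous_toCarrier (d : ContinuousMetric X) : Continuous d.toCarrier := by
  refine Metric.continuous_iff'.2 fun x ε hε => ?_
  have : Continuous fun y => d y x := d.continuous'.comp (continuous_id.prodMk continuous_const)
  exact this.continuousAt.eventually (gt_mem_nhds (by rwa [← d.apply_self' x] at hε))

instance [CompactSpace X] (d : ContinuousMetric X) : CompactSpace d.Carrier :=
  ⟨by
    have := isCompact_range d.continuous_toCarrier
    rwa [d.surjective_toCarrier.range_eq] at this⟩

instance [Nonempty X] (d : ContinuousMetric X) : Nonempty d.Carrier := ‹Nonempty X›

def toGHSpace [CompactSpace X] [Nonempty X] (d : ContinuousMetric X) : GHSpace :=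
  GromovHausdorff.toGHSpace d.Carrier

def ofDist (X : Type) [MetricSpace X] : ContinuousMetric X :=
  ⟨dist, dist_self, dist_comm, dist_triangle, fun _ _ => dist_pos.2, continuous_dist⟩

theorem toGHSpace_ofDist (X : Type) [MetricSpace X] [CompactSpace X] [Nonempty X] :
    (ofDist X).toGHSpace = GromovHausdorff.toGHSpace X :=
  toGHSpace_eq_toGHSpace_iff_isometryEquiv.2
    ⟨⟨Equiv.refl _, Isometry.of_dist_eq fun _ _ => rfl⟩⟩

theorem dist_toGHSpace_le {Y : Type} [TopologicalSpace Y] [CompactSpace X] [Nonempty X]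
    [CompactSpace Y] [Nonempty Y] (d : ContinuousMetric X) (e : ContinuousMetric Y) {g : X → Y}
    (hg : Surjective g) {ε : ℝ} (h : ∀ x x', |d x x' - e (g x) (g x')| ≤ 2 * ε) :
    dist d.toGHSpace e.toGHSpace ≤ ε :=
  dist_toGHSpace_le_of_surjective (X := d.Carrier) (Y := e.Carrier) hg h

section

variable {Y : Type} [TopologicalSpace Y]

def interpolate (d : ContinuousMetric X) (e : ContinuousMetric Y) {g : X → Y} (hg : Continuous g)
    {t : ℝ} (ht0 : 0 ≤ t) (ht1 : t < 1) : ContinuousMetric X where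
  toFun x y := (1 - t) * d x y + t * e (g x) (g y)
  apply_self' x := by simp [d.apply_self', e.apply_self']
  symm' x y := by rw [d.symm', e.symm']
  triangle' x y z := by
    nlinarith [mul_le_mul_of_nonneg_left (d.triangle' x y z) (sub_nonneg.2 ht1.le),
      mul_le_mul_of_nonneg_left (e.triangle' (g x) (g y) (g z)) ht0]
  pos' x y h := by nlinarith [d.pos' x y h, mul_nonneg ht0 (e.nonneg (g x) (g y))]
  continuous' := by
    have := e.continuous'.comp (hg.prodMap hg)
    have := d.continuous'
    fun_prop

theorem interpolate_apply (d : ContinuousMetric X) (e : ContinuousMetric Y) {g : X → Y}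
    (hg : Continuous g) {t : ℝ} (ht0 : 0 ≤ t) (ht1 : t < 1) (x y : X) :
    d.interpolate e hg ht0 ht1 x y = (1 - t) * d x y + t * e (g x) (g y) := rfl

end

section

variable {Y : Type} [TopologicalSpace Y] [DiscreteTopology Y]

open Classical in
noncomputable def addBump (d : ContinuousMetric X) {g : X → Y} (hg : Continuous g) {e : Sym2 Y}
    (he : ¬ e.IsDiag) {w : ℝ} (hw : 0 ≤ w)
    (htri : ∀ x y z, s(g x, g z) = e → g y ≠ g x → g y ≠ g z → d x z + w ≤ d x y + d y z) :
    ContinuousMetric X where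
  toFun x y := d x y + if s(g x, g y) = e then w else 0
  apply_self' x := by
    have : s(g x, g x) ≠ e := fun h => he (h ▸ Sym2.mk_isDiag_iff.2 rfl)
    simp [d.apply_self', this]
  symm' x y := by rw [d.symm', Sym2.eq_swap]
  triangle' x y z := by
    have hb (x y : X) : 0 ≤ if s(g x, g y) = e then w else 0 := by positivity
    by_cases hxz : s(g x, g z) = e
    · by_cases hyx : g y = g x
      · have hyz : s(g y, g z) = e := hyx ▸ hxz
        simp only [if_pos hxz, if_pos hyz]
        linarith [d.triangle' x y z, hb x y]
      by_cases hyz : g y = g z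
      · have hxy : s(g x, g y) = e := hyz ▸ hxz
        simp only [if_pos hxz, if_pos hxy]
        linarith [d.triangle' x y z, hb y z]
      simp only [if_pos hxz]
      linarith [htri x y z hxz hyx hyz, hb x y, hb y z]
    · simp only [if_neg hxz]
      linarith [d.triangle' x y z, hb x y, hb y z]
  pos' x y h := by
    have := d.pos' x y h
    split_ifs <;> linarith
  continuous' := d.continuous'.add <|
    (continuous_of_discreteTopology (f := fun p : Y × Y => if s(p.1, p.2) = e then w else 0)).comp
      (hg.prodMap hg)

open Classical in
theorem addBump_apply (d : ContinuousMetric X) {g : X → Y} (hg : Continuous g) {e : Sym2 Y}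
    (he : ¬ e.IsDiag) {w : ℝ} (hw : 0 ≤ w) {htri} (x y : X) :
    d.addBump hg he hw htri x y = d x y + if s(g x, g y) = e then w else 0 := rfl

theorem dist_toGHSpace_addBump_le [CompactSpace X] [Nonempty X] (d : ContinuousMetric X)
    {g : X → Y} (hg : Continuous g) {e : Sym2 Y} (he : ¬ e.IsDiag) {w₁ w₂ : ℝ} (hw₁ : 0 ≤ w₁)
    (hw₂ : 0 ≤ w₂) {htri₁ htri₂} :
    dist (d.addBump hg he hw₁ htri₁).toGHSpace (d.addBump hg he hw₂ htri₂).toGHSpace ≤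
      |w₁ - w₂| / 2 := by
  refine dist_toGHSpace_le _ _ surjective_id fun x y => ?_
  simp only [addBump_apply, id]
  split_ifs <;> simp only [add_sub_add_left_eq_sub, add_zero, sub_self, abs_zero] <;>
    linarith [abs_nonneg (w₁ - w₂)]

end

theorem exists_max_sub_dist_on_sym2_eq [CompactSpace X] {M : Type} [MetricSpace M]
    (d : ContinuousMetric X) {g : X → M} (hgc : Continuous g)
    (hg : Surjective g) (e : Sym2 M) :
    ∃ x₀ z₀, s(g x₀, g z₀) = e ∧
      ∀ x z, s(g x, g z) = e → d x z - dist (g x) (g z) ≤ d x₀ z₀ - dist (g x₀) (g z₀) := by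
  induction e using Sym2.ind with | _ m₁ m₂ => ?_
  have hK : IsCompact ((g ⁻¹' {m₁}) ×ˢ (g ⁻¹' {m₂})) :=
    ((isClosed_singleton.preimage hgc).prod (isClosed_singleton.preimage hgc)).isCompact
  obtain ⟨Q, ⟨hQ₁, hQ₂⟩, hQ⟩ := hK.exists_isMaxOn
    ⟨(surjInv hg m₁, surjInv hg m₂), surjInv_eq hg m₁, surjInv_eq hg m₂⟩
    (d.continuous'.sub (continuous_dist.comp (hgc.prodMap hgc))).continuousOn
  refine ⟨Q.1, Q.2, by rw [hQ₁, hQ₂], fun x z hxz => ?_⟩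
  rcases Sym2.eq_iff.1 hxz with ⟨hx, hz⟩ | ⟨hx, hz⟩
  · exact hQ (show (x, z) ∈ _ from ⟨hx, hz⟩)
  · rw [d.symm', dist_comm]
    exact hQ (show (z, x) ∈ _ from ⟨hz, hx⟩)

end ContinuousMetric

open Classical in
/-- The space `Z`, joined to every point of the sphere. -/
noncomputable def inflate (M : Type) [MetricSpace M] [Finite M] {r : ℝ} (hr : 0 ≤ r) :
    ContinuousMetric M where
  toFun a b := dist a b + if a = b then 0 else 2 * r
  apply_self' a := by simp
  symm' a b := by simp [dist_comm, eq_comm]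
  triangle' a b c := by
    have := dist_triangle a b c
    by_cases hab : a = b <;> by_cases hbc : b = c <;> by_cases hac : a = c <;>
      simp_all <;> linarith
  pos' a b h := by simp only [h, if_false]; linarith [dist_pos.2 h, hr]
  continuous' := continuous_of_discreteTopology

open Classical in
theorem inflate_apply {M : Type} [MetricSpace M] [Finite M] {r : ℝ} (hr : 0 ≤ r) (a b : M) :
    inflate M hr a b = dist a b + if a = b then 0 else 2 * r := rfl

theorem abs_inflate_sub_dist_le {M : Type} [MetricSpace M] [Finite M] {r : ℝ} (hr : 0 ≤ r)
    (a b : M) : |inflate M hr a b - dist a b| ≤ 2 * r := by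
  rw [inflate_apply]
  split_ifs <;> simp [abs_of_nonneg, hr]

namespace IsSmallRadius

variable {M : Type} [MetricSpace M] {r : ℝ}

theorem eq_of_dist_le (hM : IsSmallRadius M r) {m m' : M} (h : dist m m' ≤ 4 * r) : m = m' :=
  by_contra fun hne => (hM.sep m m' hne).not_ge h

theorem eq_of_abs_sub_le (hM : IsSmallRadius M r) {a : ℝ} {m m' : M} (ha : a ≤ 2 * r)
    (h : |a - dist m m'| ≤ 2 * r) : m = m' :=
  hM.eq_of_dist_le (by linarith [abs_le.1 h])

theorem continuous_of_abs_sub_dist_le (hM : IsSmallRadius M r) {X : Type} [TopologicalSpace X]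
    (d : ContinuousMetric X) {g : X → M} (hg : ∀ x y, |d x y - dist (g x) (g y)| ≤ 2 * r) :
    Continuous g :=
  (isLocallyConstant_of_lt_imp_eq d.continuous' d.apply_self' (by linarith [hM.pos] : 0 < 2 * r)
    fun x y h => hM.eq_of_abs_sub_le h.le (hg x y)).continuous

theorem eq_of_distortion_lt (hM : IsSmallRadius M r) [Finite M] {X : Type} (d : X → X → ℝ)
    {g φ : X → M} (hg : Surjective g) (hgd : ∀ x y, |d x y - dist (g x) (g y)| ≤ 2 * r)
    (hφd : ∀ x y, |d x y - dist (φ x) (φ y)| < 2 * r) (hφ : ∀ m, ∃ x, dist (φ x) m < 4 * r) :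
    φ = g := by
  have hfib (x y : X) (h : g x = g y) : φ x = φ y := by
    refine hM.eq_of_dist_le ?_
    have := hgd x y
    rw [h, dist_self, sub_zero] at this
    linarith [abs_le.1 this, abs_lt.1 (hφd x y)]
  set f := φ ∘ surjInv hg
  have hfg (x : X) : f (g x) = φ x := hfib _ _ (surjInv_eq hg _)
  have hf : Surjective f := fun m =>
    let ⟨x, hx⟩ := hφ m
    ⟨g x, (hfg x).trans (hM.eq_of_dist_le hx.le)⟩
  have hid : Equiv.ofBijective f (Finite.surjective_iff_bijective.1 hf) = Equiv.refl M := by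
    refine hM.rigid _ fun m m' => ?_
    obtain ⟨x, rfl⟩ := hg m
    obtain ⟨y, rfl⟩ := hg m'
    simp only [Equiv.ofBijective_apply, hfg]
    linarith [abs_sub_le (dist (g x) (g y)) (d x y) (dist (φ x) (φ y)), abs_sub_comm (d x y)
      (dist (g x) (g y)), hgd x y, hφd x y]
  funext x
  rw [← hfg x]
  exact congrArg (· (g x)) hid

variable [Finite M] [Nonempty M]

theorem dist_toGHSpace_eq (hM : IsSmallRadius M r) {X : Type} [MetricSpace X] [CompactSpace X]
    [Nonempty X] {g : X → M} (hg : Surjective g)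
    (hgd : ∀ x y, |dist x y - dist (g x) (g y)| ≤ 2 * r)
    (hwit : ∃ x y, |dist x y - dist (g x) (g y)| = 2 * r) :
    dist (toGHSpace M) (toGHSpace X) = r := by
  rw [dist_comm]
  refine le_antisymm (dist_toGHSpace_le_of_surjective hg hgd) (not_lt.1 fun hlt => ?_)
  obtain ⟨φ, hφd, hφ⟩ := exists_map_of_dist_toGHSpace (X := X) (Y := M)
  obtain rfl := hM.eq_of_distortion_lt dist hg hgd (fun x y => (hφd x y).trans_lt (by linarith))
    fun m => (hφ m).imp fun x hx => hx.trans_lt (by linarith [hM.pos])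
  obtain ⟨x, y, hxy⟩ := hwit
  linarith [hφd x y]

theorem exists_map_of_dist_eq (hM : IsSmallRadius M r) {X : Type} [MetricSpace X]
    [CompactSpace X] [Nonempty X] (h : dist (toGHSpace M) (toGHSpace X) = r) :
    ∃ g : X → M, Surjective g ∧ (∀ x y, |dist x y - dist (g x) (g y)| ≤ 2 * r) ∧
      ∃ x y, |dist x y - dist (g x) (g y)| = 2 * r := by
  obtain ⟨g, hgd, hg⟩ := exists_map_of_dist_toGHSpace (X := X) (Y := M)
  rw [dist_comm, h] at hgd hg
  have hsurj : Surjective g := fun m =>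
    (hg m).imp fun x hx => hM.eq_of_dist_le (by linarith [hM.pos])
  have hgc : Continuous g := hM.continuous_of_abs_sub_dist_le (.ofDist X) hgd
  have hΔ : Continuous fun p : X × X => |dist p.1 p.2 - dist (g p.1) (g p.2)| := by fun_prop
  obtain ⟨P, -, hP⟩ := isCompact_univ.exists_isMaxOn univ_nonempty hΔ.continuousOn
  refine ⟨g, hsurj, hgd, P.1, P.2, le_antisymm (hgd _ _) (not_lt.1 fun hlt => ?_)⟩
  have := dist_toGHSpace_le_of_surjective hsurj (ε := |dist P.1 P.2 - dist (g P.1) (g P.2)| / 2)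
    fun x y => by linarith [isMaxOn_univ_iff.1 hP (x, y)]
  rw [dist_comm, h] at this
  linarith

theorem dist_toGHSpace_continuousMetric_eq (hM : IsSmallRadius M r) {X : Type}
    [TopologicalSpace X] [CompactSpace X] [Nonempty X] (d : ContinuousMetric X) {g : X → M}
    (hg : Surjective g) (hgd : ∀ x y, |d x y - dist (g x) (g y)| ≤ 2 * r)
    (hwit : ∃ x y, |d x y - dist (g x) (g y)| = 2 * r) :
    dist (toGHSpace M) d.toGHSpace = r :=
  hM.dist_toGHSpace_eq (X := d.Carrier) hg hgd hwit

theorem dist_toGHSpace_inflate (hM : IsSmallRadius M r) [Nontrivial M] :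
    dist (toGHSpace M) (inflate M hM.pos.le).toGHSpace = r := by
  obtain ⟨a, b, hab⟩ := exists_pair_ne M
  refine hM.dist_toGHSpace_continuousMetric_eq _ surjective_id (abs_inflate_sub_dist_le _)
    ⟨a, b, ?_⟩
  simp [inflate_apply, hab, hM.pos.le]

section

variable {X : Type} [TopologicalSpace X] [CompactSpace X] [Nonempty X]

theorem joinedIn_inflate (hM : IsSmallRadius M r) (d : ContinuousMetric X) {g : X → M}
    (hg : Surjective g) (hgd : ∀ x y, |d x y - dist (g x) (g y)| ≤ 2 * r) {x₀ y₀ : X}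
    (hne : g x₀ ≠ g y₀) (h₀ : d x₀ y₀ - dist (g x₀) (g y₀) = 2 * r) :
    JoinedIn (sphere (toGHSpace M) r) d.toGHSpace (inflate M hM.pos.le).toGHSpace := by
  have : Nontrivial M := ⟨⟨_, _, hne⟩⟩
  set Z := inflate M hM.pos.le
  have hgc := hM.continuous_of_abs_sub_dist_le d hgd
  let D (t : unitInterval) (ht : (t : ℝ) < 1) := d.interpolate Z hgc t.2.1 ht
  have hgap (x y : X) : |d x y - Z (g x) (g y)| ≤ 4 * r := by
    have := abs_sub_le (d x y) (dist (g x) (g y)) (Z (g x) (g y))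
    rw [abs_sub_comm (dist _ _)] at this
    linarith [hgd x y, abs_inflate_sub_dist_le hM.pos.le (g x) (g y)]
  have hDZ (t ht) (x y : X) : D t ht x y - Z (g x) (g y) = (1 - t) * (d x y - Z (g x) (g y)) := by
    simp only [D, ContinuousMetric.interpolate_apply]; ring
  have hDD (s t hs ht) (x y : X) :
      D s hs x y - D t ht x y = (t - s) * (d x y - Z (g x) (g y)) := by
    simp only [D, ContinuousMetric.interpolate_apply]; ring
  have hDd (t ht) (x y : X) : D t ht x y - dist (g x) (g y) =
      (1 - t) * (d x y - dist (g x) (g y)) + t * (Z (g x) (g y) - dist (g x) (g y)) := by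
    simp only [D, ContinuousMetric.interpolate_apply]; ring
  have hD0 : D 0 zero_lt_one = d := by
    ext x y; simp [D, ContinuousMetric.interpolate_apply]
  have := JoinedIn.of_dist_le_mul_of_lt_one (S := sphere (toGHSpace M) r)
    (fun t ht => (D t ht).toGHSpace) (2 * r) (fun s t hs ht => ?_) (fun t ht => ?_)
    (fun t ht => ?_) (mem_sphere'.2 hM.dist_toGHSpace_inflate)
  · rwa [hD0] at this
  · refine (D s hs).dist_toGHSpace_le (D t ht) surjective_id fun x y => ?_
    rw [id, id, hDD, abs_mul, Subtype.dist_eq, Real.dist_eq, abs_sub_comm]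
    nlinarith [hgap x y, abs_nonneg ((s : ℝ) - t)]
  · refine (D t ht).dist_toGHSpace_le Z hg fun x y => ?_
    rw [hDZ, abs_mul, abs_of_pos (sub_pos.2 ht)]
    nlinarith [hgap x y]
  · refine mem_sphere'.2 (hM.dist_toGHSpace_continuousMetric_eq _ hg (fun x y => ?_) ⟨x₀, y₀, ?_⟩)
    · have ha := abs_le.1 (hgd x y)
      have hb := abs_le.1 (abs_inflate_sub_dist_le hM.pos.le (g x) (g y))
      have ht0 : (0 : ℝ) ≤ t := t.2.1
      rw [hDd, abs_le]
      constructor <;> nlinarith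
    · have hZ : Z (g x₀) (g y₀) - dist (g x₀) (g y₀) = 2 * r := by
        simp [Z, inflate_apply, hne]
      rw [hDd, h₀, hZ, abs_of_nonneg (by linarith [hM.pos])]
      ring

theorem exists_joinedIn_of_sym2_ne (hM : IsSmallRadius M r) (d : ContinuousMetric X) {g : X → M}
    (hg : Surjective g) (hgd : ∀ x y, |d x y - dist (g x) (g y)| ≤ 2 * r) {p q : X}
    (hpq : |d p q - dist (g p) (g q)| = 2 * r) {e : Sym2 M} (he : ¬ e.IsDiag)
    (hpe : s(g p, g q) ≠ e) :
    ∃ d' : ContinuousMetric X, (∀ x y, |d' x y - dist (g x) (g y)| ≤ 2 * r) ∧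
      (∃ x y, g x ≠ g y ∧ d' x y - dist (g x) (g y) = 2 * r) ∧
      JoinedIn (sphere (toGHSpace M) r) d.toGHSpace d'.toGHSpace := by
  have hgc := hM.continuous_of_abs_sub_dist_le d hgd
  have hne {x z : X} (h : s(g x, g z) = e) : g x ≠ g z := fun h' => he (h ▸ Sym2.mk_isDiag_iff.2 h')
  obtain ⟨x₀, z₀, he₀, hmax⟩ := d.exists_max_sub_dist_on_sym2_eq hgc hg e
  set c := 2 * r - (d x₀ z₀ - dist (g x₀) (g z₀))
  have hc : 0 ≤ c := by linarith [abs_le.1 (hgd x₀ z₀)]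
  have hc' : c ≤ 4 * r := by linarith [abs_le.1 (hgd x₀ z₀)]
  have htri (t : unitInterval) (x y z : X) (hxz : s(g x, g z) = e) (hyx : g y ≠ g x)
      (hyz : g y ≠ g z) : d x z + t * c ≤ d x y + d y z := by
    have := hM.triangle _ _ _ hyx.symm hyz (hne hxz)
    nlinarith [hmax x z hxz, abs_le.1 (hgd x y), abs_le.1 (hgd y z), t.2.2]
  let D (t : unitInterval) := d.addBump hgc he (mul_nonneg t.2.1 hc) (htri t)
  have hDd (t : unitInterval) (x y : X) : |D t x y - dist (g x) (g y)| ≤ 2 * r := by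
    have ht : (t : ℝ) * c ≤ c := mul_le_of_le_one_left hc t.2.2
    have := abs_le.1 (hgd x y)
    simp only [D, ContinuousMetric.addBump_apply]
    split_ifs with hxy
    · have := hmax x y hxy
      rw [abs_le]; constructor <;> nlinarith [mul_nonneg t.2.1 hc]
    · simpa using hgd x y
  have hDp (t : unitInterval) : |D t p q - dist (g p) (g q)| = 2 * r := by
    simpa [D, ContinuousMetric.addBump_apply, hpe] using hpq
  have hD0 : D 0 = d := by ext x y; simp [D, ContinuousMetric.addBump_apply]
  refine ⟨D 1, hDd 1, ⟨x₀, z₀, hne he₀, ?_⟩, ?_⟩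
  · simp only [D, ContinuousMetric.addBump_apply, if_pos he₀, Set.Icc.coe_one, one_mul, c]
    ring
  have := JoinedIn.of_dist_le_mul (S := sphere (toGHSpace M) r) (fun t => (D t).toGHSpace)
    (2 * r) (fun s t => ?_)
    (fun t => mem_sphere'.2 (hM.dist_toGHSpace_continuousMetric_eq _ hg (hDd t) ⟨p, q, hDp t⟩))
  · rwa [hD0] at this
  refine (d.dist_toGHSpace_addBump_le hgc he _ _).trans ?_
  rw [← sub_mul, abs_mul, abs_of_nonneg hc, Subtype.dist_eq, Real.dist_eq]
  nlinarith [abs_nonneg ((s : ℝ) - t)]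

end

end IsSmallRadius

theorem Sym2.exists_not_isDiag_ne {α : Type*} [Fintype α] (h : 3 ≤ Fintype.card α) (z : Sym2 α) :
    ∃ e : Sym2 α, ¬ e.IsDiag ∧ e ≠ z := by
  obtain ⟨a, b, c, hab, hac, hbc⟩ := Fintype.two_lt_card_iff.1 h
  by_cases hz : z = s(a, b)
  · exact ⟨s(a, c), Sym2.mk_isDiag_iff.not.2 hac, hz ▸ fun h => hbc (Sym2.congr_right.1 h).symm⟩
  · exact ⟨s(a, b), Sym2.mk_isDiag_iff.not.2 hab, Ne.symm hz⟩

theorem small_sphere_isPathConnected_general {M : Type} [MetricSpace M] [Fintype M] [Nonempty M]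
    (h3 : 3 ≤ Fintype.card M)
    (r : ℝ) (hr0 : 0 < r)
    (hr : ENNReal.ofReal r < min (sSpec M / 4) (min (eSpec M / 4) (tSpec M / 6))) :
    IsPathConnected {X : GromovHausdorff.GHSpace |
      dist (GromovHausdorff.toGHSpace M) X = r} := by
  have hM : IsSmallRadius M r := .of_lt hr0 hr
  have : Nontrivial M := Fintype.one_lt_card_iff_nontrivial.1 (by omega)
  have hS : {X : GHSpace | dist (toGHSpace M) X = r} = sphere (toGHSpace M) r := by
    ext; exact mem_sphere'.symm
  rw [hS]
  refine ⟨_, mem_sphere'.2 hM.dist_toGHSpace_inflate, fun {X} hX => ?_⟩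
  rw [mem_sphere', ← X.toGHSpace_rep] at hX
  rw [← X.toGHSpace_rep, ← ContinuousMetric.toGHSpace_ofDist X.Rep]
  obtain ⟨g, hg, hgd, p, q, hpq⟩ := hM.exists_map_of_dist_eq hX
  obtain ⟨e, he, hpe⟩ := Sym2.exists_not_isDiag_ne h3 s(g p, g q)
  obtain ⟨d, hd, ⟨x₀, y₀, hne, h₀⟩, hXd⟩ :=
    hM.exists_joinedIn_of_sym2_ne (.ofDist X.Rep) hg hgd hpq he hpe.symm
  exact (hXd.trans (hM.joinedIn_inflate d hg hd hne h₀)).symm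

/-- Let `M` be a finite generic metric space with at least 3 points
(`s(M) > 0`, `t(M) > 0`, `e(M) > 0`) and let
`0 < r < min (s(M)/4) (e(M)/4) (t(M)/6)`.  Then the sphere of radius `r` centered at the
isometry class of `M` is a path-connected subset of `GHSpace`. -/
theorem small_sphere_isPathConnected {M : Type} [MetricSpace M] [Fintype M] [Nonempty M]
    (h3 : 3 ≤ Fintype.card M)
    (hs : 0 < sSpec M) (ht : 0 < tSpec M) (he : 0 < eSpec M)
    (r : ℝ) (hr0 : 0 < r)
    (hr : ENNReal.ofReal r < min (sSpec M / 4) (min (eSpec M / 4) (tSpec M / 6))) :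
    IsPathConnected {X : GromovHausdorff.GHSpace |
      dist (GromovHausdorff.toGHSpace M) X = r} :=
  small_sphere_isPathConnected_general h3 r hr0 hr
end

section
/- Let q > 4 be a real number and define d : ℕ × ℕ → ℝ by d(m,n) = |q^m − q^n| + 1 for m ≠ n and d(m,m) = 0. Then d is a metric on ℕ, and for every bijection σ : ℕ → ℕ with σ ≠ id one has sup_{m,n ∈ ℕ} | d(m,n) − d(σ(m), σ(n)) | ≥ q − 1; in particular e(X) ≥ q − 1 for the metric space X = (ℕ, d). -/
open scoped ENNReal

private lemma myPowLe (q : ℝ) (hq : 4 < q) {s t : ℕ} (h : s ≤ t) : q ^ s ≤ q ^ t :=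
  pow_le_pow_right₀ (by linarith) h

private lemma key_lt (q : ℝ) (hq : 4 < q) {s t s' t' : ℕ} (hs : s < t) (hs' : s' < t')
    (htt : t < t') : q - 1 ≤ (q ^ t' - q ^ s') - (q ^ t - q ^ s) := by
  have h1 : q ^ s' ≤ q ^ (t' - 1) := myPowLe q hq (by omega)
  have h2 : q ^ t ≤ q ^ (t' - 1) := myPowLe q hq (by omega)
  have h3 : (1:ℝ) ≤ q ^ s := one_le_pow₀ (by linarith)
  have h4 : (1:ℝ) ≤ q ^ (t' - 1) := one_le_pow₀ (by linarith)
  have h5 : q ^ t' = q * q ^ (t' - 1) := by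
    rw [← pow_succ']; congr 1; omega
  nlinarith

private lemma key_eq (q : ℝ) (hq : 4 < q) {s s' : ℕ} (h : s < s') :
    q - 1 ≤ q ^ s' - q ^ s := by
  have h1 : q ^ (s + 1) ≤ q ^ s' := myPowLe q hq (by omega)
  have h3 : (1:ℝ) ≤ q ^ s := one_le_pow₀ (by linarith)
  have h5 : q ^ (s + 1) = q * q ^ s := by rw [pow_succ]; ring
  nlinarith

private lemma key (q : ℝ) (hq : 4 < q) {s t s' t' : ℕ} (hs : s < t) (hs' : s' < t')
    (hne : ¬(s = s' ∧ t = t')) :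
    q - 1 ≤ |(q ^ t - q ^ s) - (q ^ t' - q ^ s')| := by
  rcases lt_trichotomy t t' with h | h | h
  · rw [abs_sub_comm]
    exact le_trans (key_lt q hq hs hs' h) (le_abs_self _)
  · subst h
    have hss : s ≠ s' := fun e => hne ⟨e, rfl⟩
    rcases hss.lt_or_gt with h' | h'
    · have := key_eq q hq h'
      refine le_trans ?_ (le_abs_self _)
      linarith
    · rw [abs_sub_comm]
      have := key_eq q hq h'
      refine le_trans ?_ (le_abs_self _)
      linarith
  · exact le_trans (key_lt q hq hs' hs h) (le_abs_self _)

private lemma abs_pow_eq (q : ℝ) (hq : 4 < q) {m n : ℕ} (h : m ≠ n) :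
    |q ^ m - q ^ n| = q ^ (max m n) - q ^ (min m n) := by
  rcases h.lt_or_gt with h | h
  · rw [max_eq_right h.le, min_eq_left h.le, abs_sub_comm,
      abs_of_nonneg (by have := myPowLe q hq h.le; linarith)]
  · rw [max_eq_left h.le, min_eq_right h.le,
      abs_of_nonneg (by have := myPowLe q hq h.le; linarith)]

private lemma key2 (q : ℝ) (hq : 4 < q) {a b a' b' : ℕ} (hab : a ≠ b) (hab' : a' ≠ b')
    (h1 : a' ≠ a) (h2 : a' ≠ b) :
    q - 1 ≤ abs (|q ^ a - q ^ b| - |q ^ a' - q ^ b'|) := by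
  rw [abs_pow_eq q hq hab, abs_pow_eq q hq hab']
  apply key q hq (by omega) (by omega)
  rintro ⟨e1, e2⟩
  omega

/-- For `q > 4`, the function `d(m,n) = |q^m − q^n| + 1` (for `m ≠ n`,
and `d(m,m) = 0`) is a metric on `ℕ`, and every non-identity bijection of `ℕ` has
distortion at least `q − 1` with respect to this metric. -/
theorem geometric_progression_space_generic (q : ℝ) (hq : 4 < q)
    (d : ℕ → ℕ → ℝ)
    (hd : ∀ m n, d m n = if m = n then 0 else |q ^ m - q ^ n| + 1) :
    ((∀ m n, d m n = d n m) ∧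
     (∀ m n, 0 ≤ d m n) ∧
     (∀ m n, d m n = 0 ↔ m = n) ∧
     (∀ m n k, d m k ≤ d m n + d n k)) ∧
    ∀ σ : ℕ → ℕ, Function.Bijective σ → σ ≠ id →
      ENNReal.ofReal (q - 1) ≤
        ⨆ (m : ℕ) (n : ℕ), ENNReal.ofReal |d m n - d (σ m) (σ n)| := by
  constructor
  · refine ⟨?_, ?_, ?_, ?_⟩
    · intro m n
      rw [hd, hd]
      rcases eq_or_ne m n with h | h
      · simp [h]
      · rw [if_neg h, if_neg (Ne.symm h), abs_sub_comm]
    · intro m n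
      rw [hd]
      split
      · exact le_refl _
      · positivity
    · intro m n
      rw [hd]
      split_ifs with h
      · simp [h]
      · have hpos : 0 < |q ^ m - q ^ n| + 1 := by positivity
        exact ⟨fun h0 => absurd h0 hpos.ne', fun h' => absurd h' h⟩
    · intro m n k
      rw [hd, hd, hd]
      have habs := abs_sub_le (q ^ m) (q ^ n) (q ^ k)
      have h1 := abs_nonneg (q ^ m - q ^ n)
      have h2 := abs_nonneg (q ^ n - q ^ k)
      have h3 := abs_nonneg (q ^ m - q ^ k)
      split_ifs <;> first
        | omega
        | linarith
        | (subst_vars; linarith)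
  · intro σ hσ hne
    obtain ⟨a, ha⟩ : ∃ a, σ a ≠ a := by
      by_contra h
      push_neg at h
      exact hne (funext h)
    set b := a + σ a + 1 with hb
    have hab : a ≠ b := by omega
    have hσab : σ a ≠ b := by omega
    have hinj : σ a ≠ σ b := fun h => hab (hσ.injective h)
    have hkey : q - 1 ≤ |d a b - d (σ a) (σ b)| := by
      rw [hd, hd, if_neg hab, if_neg hinj]
      have he : |q ^ a - q ^ b| + 1 - (|q ^ (σ a) - q ^ (σ b)| + 1)
          = |q ^ a - q ^ b| - |q ^ (σ a) - q ^ (σ b)| := by ring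
      rw [he]
      exact key2 q hq hab hinj ha hσab
    calc ENNReal.ofReal (q - 1) ≤ ENNReal.ofReal |d a b - d (σ a) (σ b)| :=
          ENNReal.ofReal_le_ofReal hkey
      _ ≤ ⨆ (m : ℕ) (n : ℕ), ENNReal.ofReal |d m n - d (σ m) (σ n)| :=
          le_iSup_of_le a (le_iSup_of_le b le_rfl)
end
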